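/- arXiv:1309.5111 — 7 statements merged into one kernel-verified Lean document; each statement's English description precedes it below -/
import Mathlib

section
/- Let ξ be a bounded piecewise continuous function on [−h, ∞) whose discontinuity points lie in a sequence {t_k} with uniformly almost periodic differences. Suppose that for every sequence of reals (τ_k) with τ_k → ∞ there exists a subsequence (τ_{k_j}) such that the functions t ↦ ξ(t + τ_{k_j}) W-converge on [0, ∞). Then for every ε > 0 there exists T(ε) > 0 such that the set of numbers τ with the property that ‖ξ(t + τ) − ξ(t)‖ < ε for all t ≥ T(ε) satisfying t + τ ≥ T(ε), |t − t_k| > ε and |t + τ − t_k| > ε for all k, is relatively dense in ℝ (there is L > 0 such that every interval of length L contains such a τ). -/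
/-!
Bochner's argument. If for some `ε` no level `T` has relatively dense `ε`-almost periods,
then the gaps between almost periods are arbitrarily long, and since the almost periods form a
symmetric set containing `0` and growing with `T`, one can choose `f₀ < f₁ < ⋯ → ∞` such that
no difference `f_j - f_i` (`i < j`) is an `ε`-almost period beyond `f_i`. A W-convergent
subsequence of the shifts `ξ(· + f_j)` has two late members that are both `ε/2`-close to the
common limit away from its discontinuity points, so the difference of their shifts is an
`ε`-almost period beyond the smaller one: a contradiction.
-/

open Filter Set Topology

/-- A set of integers is relatively dense if some block length `N` works:
every block of `N` consecutive integers meets the set. -/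
def RelDenseZ (P : Set ℤ) : Prop :=
  ∃ N : ℕ, 0 < N ∧ ∀ k : ℤ, ∃ p ∈ P, k ≤ p ∧ p < k + N

/-- The two-sided sequence `t` is strictly increasing, unbounded in both directions,
and has uniformly almost periodic differences. -/
def UAPD (t : ℤ → ℝ) : Prop :=
  StrictMono t ∧ Tendsto t atTop atTop ∧ Tendsto t atBot atBot ∧
  ∀ ε > (0 : ℝ), ∃ P : Set ℤ, RelDenseZ P ∧
    ∀ p ∈ P, ∀ j k : ℤ, |t (k + p + j) - t (k + p) - (t (k + j) - t k)| < ε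

/-- `φ` is piecewise continuous on `[a, ∞)` with discontinuity points among `{t k}`:
continuous on each `(t k, t (k+1)] ∩ [a, ∞)`, left continuous on `(a, ∞)`, with finite
right limits at the points `t k ≥ a`. -/
def PCOn {E : Type*} [NormedAddCommGroup E] (t : ℤ → ℝ) (a : ℝ) (φ : ℝ → E) : Prop :=
  (∀ k : ℤ, ContinuousOn φ (Set.Ioc (t k) (t (k + 1)) ∩ Set.Ici a)) ∧
  (∀ x : ℝ, a < x → Tendsto φ (nhdsWithin x (Set.Iio x)) (nhds (φ x))) ∧
  (∀ k : ℤ, a ≤ t k → ∃ L : E, Tendsto φ (nhdsWithin (t k) (Set.Ioi (t k))) (nhds L))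

/-- W-convergence on `[0, ∞)` of the sequence of shifts `ξ(· + τ j)` to some piecewise
continuous limit `g` with discontinuity points `p i`: the discontinuity points
`t (i + α j) - τ j` of the shifts converge to `p i` uniformly in `i`, and the shifted
functions converge to `g` uniformly away from the points `p i`. -/
def ShiftsWConverge {E : Type*} [NormedAddCommGroup E] (t : ℤ → ℝ) (ξ : ℝ → E)
    (τ : ℕ → ℝ) : Prop :=
  ∃ (p : ℤ → ℝ) (g : ℝ → E) (α : ℕ → ℤ),
    StrictMono p ∧
    (∀ k : ℤ, ContinuousOn g (Set.Ioc (p k) (p (k + 1)) ∩ Set.Ici 0)) ∧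
    (∀ ε > (0 : ℝ), ∃ N : ℕ, ∀ j ≥ N, ∀ i : ℤ, |t (i + α j) - τ j - p i| < ε) ∧
    (∀ ε > (0 : ℝ), ∃ N : ℕ, ∀ j ≥ N, ∀ s : ℝ, 0 ≤ s →
      (∀ i : ℤ, ε < |s - p i|) → ‖ξ (s + τ j) - g s‖ < ε)

def IsRelDense (S : Set ℝ) : Prop :=
  ∃ L > 0, ∀ a : ℝ, ∃ τ ∈ Icc a (a + L), τ ∈ S

lemma exists_Icc_subset_compl_of_not_isRelDense {S : Set ℝ} (hneg : ∀ τ ∈ S, -τ ∈ S)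
    (hzero : 0 ∈ S) (hS : ¬ IsRelDense S) {m : ℝ} (hm : 0 ≤ m) :
    ∃ y, m + 1 < y ∧ ∀ x ∈ Icc (y - m) y, x ∉ S := by
  unfold IsRelDense at hS
  push Not at hS
  obtain ⟨a, ha⟩ := hS (2 * m + 2) (by linarith)
  have hgap_avoids_zero : 0 < a ∨ a + (2 * m + 2) < 0 := by
    by_contra! h
    exact ha 0 ⟨h.1, h.2⟩ hzero
  rcases hgap_avoids_zero with hright | hleft
  · refine ⟨a + m + 1, by linarith, fun x hx => ha x ⟨?_, ?_⟩⟩ <;> linarith [hx.1, hx.2]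
  · refine ⟨-(a + m + 1), by linarith, fun x hx hxS => ha (-x) ⟨?_, ?_⟩ (hneg x hxS)⟩ <;>
      linarith [hx.1, hx.2]

lemma exists_tendsto_atTop_forall_sub_notMem {G : ℝ → Set ℝ} (hmono : Monotone G)
    (hneg : ∀ T, ∀ τ ∈ G T, -τ ∈ G T) (hzero : ∀ T, 0 ∈ G T)
    (hG : ∀ T > 0, ¬ IsRelDense (G T)) :
    ∃ f : ℕ → ℝ, Tendsto f atTop atTop ∧ ∀ i j, i < j → f j - f i ∉ G (f i) := by
  obtain ⟨f, hpos, hf⟩ := exists_seq_of_forall_finset_exists (fun x : ℝ => 0 < x)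
    (fun x y => x + 1 < y ∧ y - x ∉ G x) <| by
      intro s hs
      obtain ⟨M, hM⟩ := s.bddAbove
      have hm : 0 < max M 1 := by positivity
      obtain ⟨y, hy, hyG⟩ := exists_Icc_subset_compl_of_not_isRelDense (hneg _) (hzero _)
        (hG _ hm) hm.le
      have hxm : ∀ x ∈ s, x ≤ max M 1 := fun x hx => (hM hx).trans (le_max_left M 1)
      refine ⟨y, by linarith, fun x hx => ⟨by linarith [hxm x hx], fun hxG => ?_⟩⟩
      refine hyG (y - x) ⟨?_, ?_⟩ (hmono (hxm x hx) hxG) <;> linarith [hxm x hx, hs x hx]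
  have hgrowth : ∀ k : ℕ, (k : ℝ) ≤ f k := by
    intro k
    induction k with
    | zero => simpa using (hpos 0).le
    | succ k ih => push_cast; linarith [(hf k (k + 1) k.lt_succ_self).1]
  exact ⟨f, tendsto_atTop_mono hgrowth tendsto_natCast_atTop_atTop,
    fun i j hij => (hf i j hij).2⟩

section AlmostPeriods

variable {E : Type*} [NormedAddCommGroup E] (t : ℤ → ℝ) (ξ : ℝ → E) (ε : ℝ)

def almostPeriods (T : ℝ) : Set ℝ :=
  {τ | ∀ s : ℝ, T ≤ s → T ≤ s + τ → (∀ k : ℤ, ε < |s - t k|) → (∀ k : ℤ, ε < |s + τ - t k|) →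
    ‖ξ (s + τ) - ξ s‖ < ε}

lemma almostPeriods_mono : Monotone (almostPeriods t ξ ε) :=
  fun _ _ hTT' _ hτ s hs hsτ => hτ s (hTT'.trans hs) (hTT'.trans hsτ)

lemma neg_mem_almostPeriods {T τ : ℝ} (hτ : τ ∈ almostPeriods t ξ ε T) :
    -τ ∈ almostPeriods t ξ ε T := by
  intro s hs hsτ hst hsτt
  have h := hτ (s + -τ) hsτ (by simpa using hs) hsτt (by simpa using hst)
  rwa [neg_add_cancel_right, norm_sub_rev] at h

lemma zero_mem_almostPeriods (hε : 0 < ε) (T : ℝ) : 0 ∈ almostPeriods t ξ ε T := by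
  intro s _ _ _ _
  simpa using hε

variable {t ξ}

lemma ShiftsWConverge.eventually_sub_mem_almostPeriods {τ : ℕ → ℝ}
    (hW : ShiftsWConverge t ξ τ) {ε : ℝ} (hε : 0 < ε) :
    ∃ N, ∀ j ≥ N, ∀ k ≥ N, τ k - τ j ∈ almostPeriods t ξ ε (τ j) := by
  obtain ⟨p, g, α, -, -, hjumps, hclose⟩ := hW
  obtain ⟨N₁, hN₁⟩ := hjumps (ε / 2) (half_pos hε)
  obtain ⟨N₂, hN₂⟩ := hclose (ε / 2) (half_pos hε)
  refine ⟨max N₁ N₂, fun j hj k hk s hs _ hst _ => ?_⟩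
  have hu : 0 ≤ s - τ j := sub_nonneg.mpr hs
  have hu_away : ∀ i : ℤ, ε / 2 < |s - τ j - p i| := by
    intro i
    have hsplit : s - t (i + α j) = (s - τ j - p i) - (t (i + α j) - τ j - p i) := by ring
    have := abs_sub (s - τ j - p i) (t (i + α j) - τ j - p i)
    rw [← hsplit] at this
    linarith [hst (i + α j), hN₁ j (le_of_max_le_left hj) i]
  have hj' := hN₂ j (le_of_max_le_right hj) _ hu hu_away
  have hk' := hN₂ k (le_of_max_le_right hk) _ hu hu_away
  rw [sub_add_cancel] at hj'
  rw [show s - τ j + τ k = s + (τ k - τ j) by ring] at hk'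
  calc ‖ξ (s + (τ k - τ j)) - ξ s‖
      ≤ ‖ξ (s + (τ k - τ j)) - g (s - τ j)‖ + ‖g (s - τ j) - ξ s‖ :=
        norm_sub_le_norm_sub_add_norm_sub _ _ _
    _ < ε := by rw [norm_sub_rev (g _)]; linarith

end AlmostPeriods

theorem relDense_almost_periods_general {n : ℕ} (t : ℤ → ℝ)
    (ξ : ℝ → Fin n → ℝ)
    (hcomp : ∀ τ : ℕ → ℝ, Tendsto τ atTop atTop →
      ∃ φ : ℕ → ℕ, StrictMono φ ∧ ShiftsWConverge t ξ (fun j => τ (φ j))) :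
    ∀ ε > (0 : ℝ), ∃ T > (0 : ℝ), ∃ L > (0 : ℝ), ∀ a : ℝ, ∃ τ ∈ Set.Icc a (a + L),
      ∀ s : ℝ, T ≤ s → T ≤ s + τ →
        (∀ k : ℤ, ε < |s - t k|) → (∀ k : ℤ, ε < |s + τ - t k|) →
        ‖ξ (s + τ) - ξ s‖ < ε := by
  intro ε hε
  suffices ∃ T > 0, IsRelDense (almostPeriods t ξ ε T) from this
  by_contra! hsparse
  obtain ⟨f, hf, hf_not_mem⟩ := exists_tendsto_atTop_forall_sub_notMem
    (almostPeriods_mono t ξ ε) (fun _ _ => neg_mem_almostPeriods t ξ ε)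
    (zero_mem_almostPeriods t ξ ε hε) hsparse
  obtain ⟨φ, hφ, hW⟩ := hcomp f hf
  obtain ⟨N, hN⟩ := hW.eventually_sub_mem_almostPeriods hε
  exact hf_not_mem _ _ (hφ N.lt_succ_self) (hN N le_rfl (N + 1) N.le_succ)

/-- If `ξ` is bounded and piecewise continuous on `[-h, ∞)` with discontinuity points among
a sequence `{t k}` with uniformly almost periodic differences and all its sequences of
shifts to `+∞` have W-convergent subsequences on `[0, ∞)`, then for every `ε > 0` there is
`T(ε) > 0` such that the set of `ε`-"almost periods beyond `T(ε)`" of `ξ` is relatively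
dense in `ℝ`. -/
theorem relDense_almost_periods {n : ℕ} (h : ℝ) (hh : 0 < h) (t : ℤ → ℝ) (hT : UAPD t)
    (ξ : ℝ → Fin n → ℝ) (hpc : PCOn t (-h) ξ)
    (B : ℝ) (hbd : ∀ s : ℝ, -h ≤ s → ‖ξ s‖ ≤ B)
    (hcomp : ∀ τ : ℕ → ℝ, Tendsto τ atTop atTop →
      ∃ φ : ℕ → ℕ, StrictMono φ ∧ ShiftsWConverge t ξ (fun j => τ (φ j))) :
    ∀ ε > (0 : ℝ), ∃ T > (0 : ℝ), ∃ L > (0 : ℝ), ∀ a : ℝ, ∃ τ ∈ Set.Icc a (a + L),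
      ∀ s : ℝ, T ≤ s → T ≤ s + τ →
        (∀ k : ℤ, ε < |s - t k|) → (∀ k : ℤ, ε < |s + τ - t k|) →
        ‖ξ (s + τ) - ξ s‖ < ε :=
  relDense_almost_periods_general t ξ hcomp
end

section
/- Let h > 0 and let α, γ, x_m : ℝ → ℝ be piecewise continuous functions (left-continuous, with finitely many discontinuities in each bounded interval and finite one-sided limits), with x_m bounded on bounded intervals. Define x_i(t) = ∫_{t−h}^{t} α(s) x_m(s) e^{−∫_s^{t} γ(ξ)dξ} ds. Then at every point t such that α and x_m are continuous at t and at t − h and γ is continuous at t, the function x_i is differentiable at t and x_i′(t) = α(t) x_m(t) − γ(t) x_i(t) − α(t−h) e^{−∫_{t−h}^{t} γ(s)ds} x_m(t−h). -/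
/-!
Write `G` for a primitive of `γ` and `φ = α x_m`. Since `e^{-∫_s^t γ} = e^{-G t} e^{G s}`,
`x_i(t) = e^{-G t} ∫_{t-h}^t φ(s) e^{G s} ds`, and the formula is the product rule combined with
the fundamental theorem of calculus at both ends of the window `[t - h, t]`.
The integrals make sense because piecewise continuous functions are locally integrable: they are
measurable, their discontinuities being countable, and locally bounded, having one-sided limits
everywhere.
-/

open Filter Set Topology

/-- A real function is piecewise continuous: continuous off a set `D` which is finite in
every bounded interval, left continuous everywhere, with finite right limits at points
of `D`. -/
def PiecewiseContinuousFn (f : ℝ → ℝ) : Prop :=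
  ∃ D : Set ℝ, (∀ a b : ℝ, (D ∩ Set.Icc a b).Finite) ∧
    (∀ x : ℝ, x ∉ D → ContinuousAt f x) ∧
    (∀ x : ℝ, Tendsto f (nhdsWithin x (Set.Iio x)) (nhds (f x))) ∧
    (∀ x ∈ D, ∃ L : ℝ, Tendsto f (nhdsWithin x (Set.Ioi x)) (nhds L))

open MeasureTheory Real

lemma countable_of_forall_finite_inter_Icc {D : Set ℝ}
    (hD : ∀ a b : ℝ, (D ∩ Icc a b).Finite) : D.Countable := by
  have hcover : D ⊆ ⋃ n : ℤ, D ∩ Icc (n : ℝ) (n + 1) := fun x hx =>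
    mem_iUnion.2 ⟨⌊x⌋, hx, Int.floor_le x, (Int.lt_floor_add_one x).le⟩
  exact (countable_iUnion fun n => (hD _ _).countable).mono hcover

lemma MeasureTheory.LocallyIntegrable.intervalIntegrable {E : Type*} [NormedAddCommGroup E]
    {f : ℝ → E} {μ : Measure ℝ} (hf : LocallyIntegrable f μ) (a b : ℝ) :
    IntervalIntegrable f μ a b :=
  (hf.integrableOn_isCompact isCompact_uIcc).intervalIntegrable

namespace PiecewiseContinuousFn

variable {f g : ℝ → ℝ}

lemma exists_tendsto_nhdsGT (hf : PiecewiseContinuousFn f) (x : ℝ) :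
    ∃ L, Tendsto f (𝓝[>] x) (𝓝 L) := by
  obtain ⟨D, -, hcont, -, hright⟩ := hf
  by_cases hx : x ∈ D
  · exact hright x hx
  · exact ⟨f x, (hcont x hx).tendsto.mono_left nhdsWithin_le_nhds⟩

protected lemma mul (hf : PiecewiseContinuousFn f) (hg : PiecewiseContinuousFn g) :
    PiecewiseContinuousFn fun x => f x * g x := by
  have hright (x : ℝ) : ∃ L, Tendsto (fun x => f x * g x) (𝓝[>] x) (𝓝 L) := by
    obtain ⟨L, hL⟩ := hf.exists_tendsto_nhdsGT x
    obtain ⟨M, hM⟩ := hg.exists_tendsto_nhdsGT x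
    exact ⟨L * M, hL.mul hM⟩
  obtain ⟨D, hDfin, hfcont, hfleft, -⟩ := hf
  obtain ⟨E, hEfin, hgcont, hgleft, -⟩ := hg
  refine ⟨D ∪ E, fun a b => ?_, fun x hx => ?_, fun x => (hfleft x).mul (hgleft x),
    fun x _ => hright x⟩
  · rw [union_inter_distrib_right]
    exact (hDfin a b).union (hEfin a b)
  · rw [mem_union, not_or] at hx
    exact (hfcont x hx.1).mul (hgcont x hx.2)

lemma measurable (hf : PiecewiseContinuousFn f) : Measurable f := by
  obtain ⟨D, hDfin, hcont, -, -⟩ := hf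
  refine ContinuousOn.measurable_of_countable_compl (s := Dᶜ)
    (fun x hx => (hcont x hx).continuousWithinAt) ?_
  rw [compl_compl]
  exact countable_of_forall_finite_inter_Icc hDfin

lemma isBoundedUnder_nhds (hf : PiecewiseContinuousFn f) (x : ℝ) :
    (𝓝 x).IsBoundedUnder (· ≤ ·) (norm ∘ f) := by
  obtain ⟨L, hL⟩ := hf.exists_tendsto_nhdsGT x
  obtain ⟨-, -, -, hleft, -⟩ := hf
  rw [← nhdsNE_sup_pure, ← nhdsLT_sup_nhdsGT, IsBoundedUnder, map_sup, map_sup]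
  refine isBounded_sup (isBounded_sup ?_ ?_) ?_
  · exact (hleft x).norm.isBoundedUnder_le
  · exact hL.norm.isBoundedUnder_le
  · exact ⟨‖f x‖, by simp⟩

lemma locallyIntegrable (hf : PiecewiseContinuousFn f) : LocallyIntegrable f := fun x =>
  (volume.finiteAt_nhds x).integrableAtFilter
    hf.measurable.aestronglyMeasurable.stronglyMeasurableAtFilter (hf.isBoundedUnder_nhds x)

end PiecewiseContinuousFn

section

variable {φ γ : ℝ → ℝ}

lemma MeasureTheory.LocallyIntegrable.hasDerivAt_integral_sub_const_self
    (hφ : LocallyIntegrable φ) {h t : ℝ} (hφt : ContinuousAt φ t)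
    (hφth : ContinuousAt φ (t - h)) :
    HasDerivAt (fun t => ∫ u in t - h..t, φ u) (φ t - φ (t - h)) t := by
  have hprimitive {c : ℝ} (hc : ContinuousAt φ c) :
      HasDerivAt (fun t => ∫ u in (0 : ℝ)..t, φ u) (φ c) c :=
    intervalIntegral.integral_hasDerivAt_right (hφ.intervalIntegrable 0 c)
      hφ.aestronglyMeasurable.stronglyMeasurableAtFilter hc
  refine ((hprimitive hφt).sub ((hprimitive hφth).comp_sub_const t h)).congr_of_eventuallyEq
    (Eventually.of_forall fun s => ?_)
  exact (intervalIntegral.integral_interval_sub_left (hφ.intervalIntegrable 0 s)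
    (hφ.intervalIntegrable 0 (s - h))).symm

lemma integral_mul_exp_neg_integral_eq (hγ : LocallyIntegrable γ) (a t : ℝ) :
    ∫ u in a..t, φ u * exp (-∫ r in u..t, γ r) =
      exp (-∫ r in (0 : ℝ)..t, γ r) * ∫ u in a..t, φ u * exp (∫ r in (0 : ℝ)..u, γ r) := by
  rw [← intervalIntegral.integral_const_mul]
  refine intervalIntegral.integral_congr fun u _ => ?_
  rw [← intervalIntegral.integral_interval_sub_left (hγ.intervalIntegrable 0 t)
    (hγ.intervalIntegrable 0 u), neg_sub, exp_sub, exp_neg]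
  field_simp

theorem hasDerivAt_integral_mul_exp_neg_integral (hφ : LocallyIntegrable φ)
    (hγ : LocallyIntegrable γ) {h t : ℝ} (hφt : ContinuousAt φ t)
    (hφth : ContinuousAt φ (t - h)) (hγt : ContinuousAt γ t) :
    HasDerivAt (fun t => ∫ u in t - h..t, φ u * exp (-∫ r in u..t, γ r))
      (φ t - γ t * (∫ u in t - h..t, φ u * exp (-∫ r in u..t, γ r)) -
        φ (t - h) * exp (-∫ u in t - h..t, γ u)) t := by
  set G : ℝ → ℝ := fun t => ∫ r in (0 : ℝ)..t, γ r
  have hexpG : Continuous fun u => exp (G u) :=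
    continuous_exp.comp (intervalIntegral.continuous_primitive hγ.intervalIntegrable 0)
  have hGt : HasDerivAt G (γ t) t :=
    intervalIntegral.integral_hasDerivAt_right (hγ.intervalIntegrable 0 t)
      hγ.aestronglyMeasurable.stronglyMeasurableAtFilter hγt
  have hψ : LocallyIntegrable fun u => φ u * exp (G u) :=
    locallyIntegrableOn_univ.1 <| (locallyIntegrableOn_univ.2 hφ).mul_continuousOn
      hexpG.continuousOn isClosed_univ.isLocallyClosed
  have hwindow := hψ.hasDerivAt_integral_sub_const_self (hφt.mul hexpG.continuousAt)
    (hφth.mul hexpG.continuousAt)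
  simp_rw [integral_mul_exp_neg_integral_eq hγ]
  refine (hGt.neg.exp.mul hwindow).congr_deriv ?_
  simp only [G, Pi.neg_apply]
  rw [← intervalIntegral.integral_interval_sub_left (hγ.intervalIntegrable 0 t)
    (hγ.intervalIntegrable 0 (t - h)), neg_sub, exp_sub, exp_neg]
  field_simp
  ring

end

theorem immature_integral_representation_general (h : ℝ) (α γ xm : ℝ → ℝ)
    (hαpc : PiecewiseContinuousFn α) (hγpc : PiecewiseContinuousFn γ)
    (hxmpc : PiecewiseContinuousFn xm)
    (xi : ℝ → ℝ)
    (hxi : ∀ s : ℝ, xi s = ∫ u in (s - h)..s, α u * xm u * Real.exp (-∫ r in u..s, γ r)) :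
    ∀ s : ℝ, ContinuousAt α s → ContinuousAt α (s - h) →
      ContinuousAt xm s → ContinuousAt xm (s - h) → ContinuousAt γ s →
      HasDerivAt xi
        (α s * xm s - γ s * xi s -
          α (s - h) * Real.exp (-∫ u in (s - h)..s, γ u) * xm (s - h)) s := by
  intro s hαs hαsh hxms hxmsh hγs
  rw [funext hxi]
  refine (hasDerivAt_integral_mul_exp_neg_integral (hαpc.mul hxmpc).locallyIntegrable
    hγpc.locallyIntegrable (hαs.mul hxms) (hαsh.mul hxmsh) hγs).congr_deriv ?_
  ring

/-- **The integral representation (20) solves the immature equation (11).**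
If `x_i(t) = ∫_{t-h}^t α(s) x_m(s) e^{-∫_s^t γ} ds`, then at every point where `α` and
`x_m` are continuous at `t` and `t - h` and `γ` is continuous at `t`, one has
`x_i'(t) = α(t)x_m(t) - γ(t)x_i(t) - α(t-h) e^{-∫_{t-h}^t γ} x_m(t-h)`. -/
theorem immature_integral_representation (h : ℝ) (hh : 0 < h) (α γ xm : ℝ → ℝ)
    (hαpc : PiecewiseContinuousFn α) (hγpc : PiecewiseContinuousFn γ)
    (hxmpc : PiecewiseContinuousFn xm)
    (hbdd : ∀ a b : ℝ, ∃ M : ℝ, ∀ s ∈ Set.Icc a b, |xm s| ≤ M)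
    (xi : ℝ → ℝ)
    (hxi : ∀ s : ℝ, xi s = ∫ u in (s - h)..s, α u * xm u * Real.exp (-∫ r in u..s, γ r)) :
    ∀ s : ℝ, ContinuousAt α s → ContinuousAt α (s - h) →
      ContinuousAt xm s → ContinuousAt xm (s - h) → ContinuousAt γ s →
      HasDerivAt xi
        (α s * xm s - γ s * xi s -
          α (s - h) * Real.exp (-∫ u in (s - h)..s, γ u) * xm (s - h)) s :=
  immature_integral_representation_general h α γ xm hαpc hγpc hxmpc xi hxi
end

section
/- Let h > 0, σ ∈ ℝ, let (t_k)_{k∈ℤ} be a strictly increasing sequence with t_k → ±∞ and finitely many t_k in each bounded interval, let d_k > −1 for all k, and let α, β, γ : ℝ → ℝ be piecewise continuous with discontinuities among {t_k}. Define ω(t) = (∏_{0 ≤ t_k < t} (1+d_k)) e^{−σt} for t ≥ 0 and ω(t) = (∏_{t ≤ t_k < 0}(1+d_k))^{−1} e^{−σt} for t < 0, A(t) = (∏_{t−h ≤ t_k < t} (1+d_k))^{−1} α(t−h) exp(σh − ∫_{t−h}^{t} γ(s)ds), and C(t) = ω(t) β(t). If v : ℝ → ℝ is continuous and satisfies v′(t)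 = A(t) v(t−h) + σ v(t) − C(t) v(t)² for every t ∉ {t_k}, then the function x_m(t) := ω(t) v(t) is left-continuous, satisfies x_m′(t) = α(t−h) e^{−∫_{t−h}^{t} γ(s)ds} x_m(t−h) − β(t) x_m(t)² for every t ∉ {t_k}, and satisfies x_m(t_k + 0) = (1 + d_k) x_m(t_k) for every k ∈ ℤ. -/
open Filter Set Topology

/-- `φ` is piecewise continuous with discontinuities among `{t k}`. -/
def PCWith (t : ℤ → ℝ) (φ : ℝ → ℝ) : Prop :=
  (∀ k : ℤ, ContinuousOn φ (Set.Ioc (t k) (t (k + 1)))) ∧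
  (∀ x : ℝ, Tendsto φ (nhdsWithin x (Set.Iio x)) (nhds (φ x))) ∧
  (∀ k : ℤ, ∃ L : ℝ, Tendsto φ (nhdsWithin (t k) (Set.Ioi (t k))) (nhds L))

/-- The product `∏_{a ≤ t_k < b} (1 + d_k)` over impulse points in `[a, b)`. -/
noncomputable def impProd (t d : ℤ → ℝ) (a b : ℝ) : ℝ :=
  ∏ᶠ k ∈ {k : ℤ | t k ∈ Set.Ico a b}, (1 + d k)

/-- `ω(s) = (∏_{0 ≤ t_k < s} (1 + d_k)) e^{-σ s}`, interpreted as
`(∏_{s ≤ t_k < 0} (1 + d_k))⁻¹ e^{-σ s}` for `s < 0`. -/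
noncomputable def omegaFun (t d : ℤ → ℝ) (σ : ℝ) (s : ℝ) : ℝ :=
  (if 0 ≤ s then impProd t d 0 s else (impProd t d s 0)⁻¹) * Real.exp (-(σ * s))

/-- `A(s) = (∏_{s-h ≤ t_k < s} (1 + d_k))⁻¹ α(s-h) exp(σ h - ∫_{s-h}^s γ)`. -/
noncomputable def Afun (h : ℝ) (t d : ℤ → ℝ) (σ : ℝ) (α γ : ℝ → ℝ) (s : ℝ) : ℝ :=
  (impProd t d (s - h) s)⁻¹ * α (s - h) * Real.exp (σ * h - ∫ u in (s - h)..s, γ u)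

/-- `C(s) = ω(s) β(s)`. -/
noncomputable def Cfun (t d : ℤ → ℝ) (σ : ℝ) (β : ℝ → ℝ) (s : ℝ) : ℝ :=
  omegaFun t d σ s * β s

/-!
On every interval free of impulse points `ω` is a constant multiple of `e^{-σ t}`, and crossing
`t_k` from the left multiplies that constant by `1 + d_k`. Hence `x_m = ω v` is left continuous
because `v` is, jumps by the factor `1 + d_k` at `t_k`, and away from the impulse points the product
rule together with the identity `ω(t) A(t) = α(t - h) e^{-∫_{t-h}^t γ} ω(t - h)` turns (22) into (12).
-/

section ImpulseProducts

variable {t d : ℤ → ℝ}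

lemma impProd_pos (hd : ∀ k, -1 < d k) (a b : ℝ) : 0 < impProd t d a b :=
  finprod_mem_induction (0 < ·) one_pos (fun _ _ => mul_pos) fun k _ => by linarith [hd k]

variable (htfin : ∀ a b : ℝ, {k : ℤ | t k ∈ Icc a b}.Finite)
include htfin

lemma impProd_mul {a b c : ℝ} (hab : a ≤ b) (hbc : b ≤ c) :
    impProd t d a b * impProd t d b c = impProd t d a c := by
  have hfin : ∀ x y : ℝ, {k : ℤ | t k ∈ Ico x y}.Finite := fun x y =>
    (htfin x y).subset fun _ hk => Ico_subset_Icc_self hk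
  have hdisj : Disjoint {k : ℤ | t k ∈ Ico a b} {k : ℤ | t k ∈ Ico b c} :=
    disjoint_left.2 fun _ hab' hbc' => (not_le.2 hab'.2) hbc'.1
  have hunion : {k : ℤ | t k ∈ Ico a b} ∪ {k : ℤ | t k ∈ Ico b c} = {k : ℤ | t k ∈ Ico a c} := by
    ext k
    simp only [mem_union, mem_ofPred_eq, ← Ico_union_Ico_eq_Ico hab hbc]
  rw [impProd, impProd, impProd, ← finprod_mem_union hdisj (hfin a b) (hfin b c), hunion]

lemma eventually_nhdsNE_notMem_range (s : ℝ) : ∀ᶠ r in 𝓝[≠] s, r ∉ range t := by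
  have hK : (t '' {k | t k ∈ Icc (s - 1) (s + 1)} \ {s}).Finite := ((htfin _ _).image t).sdiff
  have hnear : ∀ᶠ r in 𝓝[≠] s, r ∈ Ioo (s - 1) (s + 1) :=
    nhdsWithin_le_nhds (Ioo_mem_nhds (by linarith) (by linarith))
  have hfar : ∀ᶠ r in 𝓝[≠] s, r ∉ t '' {k | t k ∈ Icc (s - 1) (s + 1)} \ {s} :=
    nhdsWithin_le_nhds (hK.isClosed.compl_mem_nhds fun hs => hs.2 rfl)
  filter_upwards [hnear, hfar, self_mem_nhdsWithin] with r hr hrK hrs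
  rintro ⟨k, rfl⟩
  exact hrK ⟨⟨k, Ioo_subset_Icc_self hr, rfl⟩, hrs⟩

lemma eventually_nhdsLT_forall_notMem_Ico (s : ℝ) : ∀ᶠ r in 𝓝[<] s, ∀ k, t k ∉ Ico r s := by
  obtain ⟨l, hl, hsub⟩ := mem_nhdsLT_iff_exists_Ioo_subset.1
    ((eventually_nhdsNE_notMem_range htfin s).filter_mono (nhdsLT_le_nhdsNE s))
  filter_upwards [Ioo_mem_nhdsLT hl] with r hr k hk
  exact hsub ⟨hr.1.trans_le hk.1, hk.2⟩ ⟨k, rfl⟩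

lemma eventually_nhdsGT_forall_mem_Ico_imp_eq (s : ℝ) :
    ∀ᶠ r in 𝓝[>] s, ∀ k, t k ∈ Ico s r → t k = s := by
  obtain ⟨u, hu, hsub⟩ := mem_nhdsGT_iff_exists_Ioo_subset.1
    ((eventually_nhdsNE_notMem_range htfin s).filter_mono (nhdsGT_le_nhdsNE s))
  filter_upwards [Ioo_mem_nhdsGT hu] with r hr k hk
  by_contra hne
  exact hsub ⟨lt_of_le_of_ne hk.1 (Ne.symm hne), hk.2.trans hr.2⟩ ⟨k, rfl⟩

lemma eventually_nhdsLT_impProd_eq_one (s : ℝ) : ∀ᶠ r in 𝓝[<] s, impProd t d r s = 1 := by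
  filter_upwards [eventually_nhdsLT_forall_notMem_Ico htfin s] with r hr
  have hempty : {k | t k ∈ Ico r s} = ∅ := eq_empty_of_forall_notMem hr
  rw [impProd, hempty, finprod_mem_empty]

lemma eventually_nhdsGT_impProd_eq (s : ℝ) :
    ∀ᶠ r in 𝓝[>] s, impProd t d s r = ∏ᶠ k ∈ {k : ℤ | t k = s}, (1 + d k) := by
  filter_upwards [eventually_nhdsGT_forall_mem_Ico_imp_eq htfin s, self_mem_nhdsWithin]
    with r hr hsr
  have hset : {k | t k ∈ Ico s r} = {k | t k = s} :=
    ext fun k => ⟨hr k, fun hk => ⟨hk.ge, hk ▸ hsr⟩⟩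
  rw [impProd, hset]
  rfl

end ImpulseProducts

noncomputable def impulseFactor (t d : ℤ → ℝ) (s : ℝ) : ℝ :=
  if 0 ≤ s then impProd t d 0 s else (impProd t d s 0)⁻¹

lemma omegaFun_eq (t d : ℤ → ℝ) (σ s : ℝ) :
    omegaFun t d σ s = impulseFactor t d s * Real.exp (-(σ * s)) := rfl

section Omega

variable {t d : ℤ → ℝ} (hd : ∀ k, -1 < d k)
  (htfin : ∀ a b : ℝ, {k : ℤ | t k ∈ Icc a b}.Finite)
include hd htfin

lemma impulseFactor_mul_impProd {a b : ℝ} (hab : a ≤ b) :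
    impulseFactor t d a * impProd t d a b = impulseFactor t d b := by
  rcases le_or_gt 0 a with ha | ha
  · rw [impulseFactor, impulseFactor, if_pos ha, if_pos (ha.trans hab), impProd_mul htfin ha hab]
  rcases le_or_gt 0 b with hb | hb
  · rw [impulseFactor, impulseFactor, if_neg ha.not_ge, if_pos hb,
      ← impProd_mul htfin ha.le hb, ← mul_assoc, inv_mul_cancel₀ (impProd_pos hd a 0).ne', one_mul]
  · rw [impulseFactor, impulseFactor, if_neg ha.not_ge, if_neg hb.not_ge,
      ← impProd_mul htfin hab hb.le, mul_inv_rev, inv_mul_cancel_right₀ (impProd_pos hd a b).ne']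

lemma omegaFun_eventuallyEq_nhdsLT (σ s : ℝ) :
    omegaFun t d σ =ᶠ[𝓝[<] s] fun r => impulseFactor t d s * Real.exp (-(σ * r)) := by
  filter_upwards [eventually_nhdsLT_impProd_eq_one htfin s, self_mem_nhdsWithin] with r hr hrs
  rw [omegaFun_eq, ← impulseFactor_mul_impProd hd htfin (le_of_lt hrs), hr, mul_one]

lemma omegaFun_eventuallyEq_nhdsGT (σ s : ℝ) :
    omegaFun t d σ =ᶠ[𝓝[>] s] fun r =>
      impulseFactor t d s * (∏ᶠ k ∈ {k : ℤ | t k = s}, (1 + d k)) * Real.exp (-(σ * r)) := by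
  filter_upwards [eventually_nhdsGT_impProd_eq htfin s, self_mem_nhdsWithin] with r hr hsr
  rw [omegaFun_eq, ← impulseFactor_mul_impProd hd htfin (le_of_lt hsr), hr]

lemma omegaFun_eventuallyEq_nhds (σ : ℝ) {s : ℝ} (hs : ∀ k, s ≠ t k) :
    omegaFun t d σ =ᶠ[𝓝 s] fun r => impulseFactor t d s * Real.exp (-(σ * r)) := by
  have hright := omegaFun_eventuallyEq_nhdsGT hd htfin σ s
  have hempty : {k | t k = s} = ∅ := eq_empty_of_forall_notMem fun k hk => hs k hk.symm
  rw [hempty, finprod_mem_empty, mul_one] at hright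
  rw [← nhdsNE_sup_pure, ← nhdsLT_sup_nhdsGT]
  exact eventually_sup.2 ⟨eventually_sup.2 ⟨omegaFun_eventuallyEq_nhdsLT hd htfin σ s, hright⟩,
    eventually_pure.2 rfl⟩

lemma omegaFun_eventuallyEq_nhdsGT_of_injective (ht : Function.Injective t) (σ : ℝ) (k : ℤ) :
    omegaFun t d σ =ᶠ[𝓝[>] t k] fun r =>
      impulseFactor t d (t k) * (1 + d k) * Real.exp (-(σ * r)) := by
  have hset : {j | t j = t k} = {k} := ext fun j => ht.eq_iff
  simpa only [hset, finprod_mem_singleton] using omegaFun_eventuallyEq_nhdsGT hd htfin σ (t k)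

lemma omegaFun_mul_Afun {h : ℝ} (hh : 0 ≤ h) (σ : ℝ) (α γ : ℝ → ℝ) (s : ℝ) :
    omegaFun t d σ s * Afun h t d σ α γ s =
      α (s - h) * Real.exp (-∫ u in (s - h)..s, γ u) * omegaFun t d σ (s - h) := by
  have hexp : Real.exp (-(σ * s)) * Real.exp (σ * h - ∫ u in (s - h)..s, γ u) =
      Real.exp (-∫ u in (s - h)..s, γ u) * Real.exp (-(σ * (s - h))) := by
    rw [← Real.exp_add, ← Real.exp_add]; ring_nf
  rw [omegaFun_eq, omegaFun_eq, Afun, ← impulseFactor_mul_impProd hd htfin (sub_le_self s hh)]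
  have hQ := mul_inv_cancel₀ (impProd_pos (t := t) hd (s - h) s).ne'
  linear_combination (impulseFactor t d (s - h) * α (s - h) * Real.exp (-(σ * s)) *
    Real.exp (σ * h - ∫ u in (s - h)..s, γ u)) * hQ + (impulseFactor t d (s - h) * α (s - h)) * hexp

lemma hasDerivAt_omegaFun_mul (σ : ℝ) {s : ℝ} (hs : ∀ k, s ≠ t k) {v : ℝ → ℝ} {v' : ℝ}
    (hv : HasDerivAt v v' s) :
    HasDerivAt (fun r => omegaFun t d σ r * v r) (omegaFun t d σ s * (v' - σ * v s)) s := by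
  have hexp : HasDerivAt (fun r => Real.exp (-(σ * r))) (Real.exp (-(σ * s)) * -σ) s := by
    simpa using ((hasDerivAt_id s).const_mul σ).neg.exp
  refine (((hexp.const_mul (impulseFactor t d s)).mul hv).congr_of_eventuallyEq ?_).congr_deriv ?_
  · filter_upwards [omegaFun_eventuallyEq_nhds hd htfin σ hs] with r hr
    simp only [Pi.mul_apply, hr]
  · rw [omegaFun_eq]
    ring

end Omega

lemma tendsto_mul_of_eventuallyEq_exp {ω v : ℝ → ℝ} {l : Filter ℝ} {x : ℝ} (hl : l ≤ 𝓝 x)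
    (hv : ContinuousAt v x) {c σ : ℝ} (hω : ω =ᶠ[l] fun r => c * Real.exp (-(σ * r))) :
    Tendsto (fun r => ω r * v r) l (𝓝 (c * Real.exp (-(σ * x)) * v x)) := by
  have hcont : ContinuousAt (fun r => c * Real.exp (-(σ * r)) * v r) x := by fun_prop
  refine (hcont.tendsto.mono_left hl).congr' ?_
  filter_upwards [hω] with r hr
  rw [hr]

theorem change_of_variables_general (h σ : ℝ) (hh : 0 < h)
    (t : ℤ → ℝ) (htmono : StrictMono t)
    (htfin : ∀ a b : ℝ, {k : ℤ | t k ∈ Set.Icc a b}.Finite)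
    (d : ℤ → ℝ) (hd : ∀ k : ℤ, -1 < d k)
    (α β γ : ℝ → ℝ)
    (v : ℝ → ℝ) (hv : Continuous v)
    (hode : ∀ s : ℝ, (∀ k : ℤ, s ≠ t k) →
      HasDerivAt v
        (Afun h t d σ α γ s * v (s - h) + σ * v s - Cfun t d σ β s * v s ^ 2) s) :
    (∀ s : ℝ, Tendsto (fun r => omegaFun t d σ r * v r)
        (nhdsWithin s (Set.Iio s)) (nhds (omegaFun t d σ s * v s))) ∧
    (∀ s : ℝ, (∀ k : ℤ, s ≠ t k) →
      HasDerivAt (fun r => omegaFun t d σ r * v r)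
        (α (s - h) * Real.exp (-∫ u in (s - h)..s, γ u) *
            (omegaFun t d σ (s - h) * v (s - h)) -
          β s * (omegaFun t d σ s * v s) ^ 2) s) ∧
    (∀ k : ℤ, Tendsto (fun r => omegaFun t d σ r * v r)
        (nhdsWithin (t k) (Set.Ioi (t k)))
        (nhds ((1 + d k) * (omegaFun t d σ (t k) * v (t k))))) := by
  refine ⟨fun s => ?_, fun s hs => ?_, fun k => ?_⟩
  · exact tendsto_mul_of_eventuallyEq_exp nhdsWithin_le_nhds hv.continuousAt
      (omegaFun_eventuallyEq_nhdsLT hd htfin σ s)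
  · refine (hasDerivAt_omegaFun_mul hd htfin σ hs (hode s hs)).congr_deriv ?_
    rw [Cfun]
    linear_combination v (s - h) * omegaFun_mul_Afun hd htfin hh.le σ α γ s
  · convert tendsto_mul_of_eventuallyEq_exp nhdsWithin_le_nhds hv.continuousAt
      (omegaFun_eventuallyEq_nhdsGT_of_injective hd htfin htmono.injective σ k) using 2
    rw [omegaFun_eq]
    ring

/-- **Change of variables (21).** If `v` is a continuous solution of the impulse-free delay
equation (22) `v' = A v(·-h) + σ v - C v²`, then `x_m := ω v` is left continuous,
satisfies the mature-population equation (12) away from impulse points, and satisfies the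
jump condition (13) `x_m(t_k + 0) = (1 + d_k) x_m(t_k)` at every impulse point. -/
theorem change_of_variables (h σ : ℝ) (hh : 0 < h)
    (t : ℤ → ℝ) (htmono : StrictMono t)
    (httop : Tendsto t atTop atTop) (htbot : Tendsto t atBot atBot)
    (htfin : ∀ a b : ℝ, {k : ℤ | t k ∈ Set.Icc a b}.Finite)
    (d : ℤ → ℝ) (hd : ∀ k : ℤ, -1 < d k)
    (α β γ : ℝ → ℝ) (hα : PCWith t α) (hβ : PCWith t β) (hγ : PCWith t γ)
    (v : ℝ → ℝ) (hv : Continuous v)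
    (hode : ∀ s : ℝ, (∀ k : ℤ, s ≠ t k) →
      HasDerivAt v
        (Afun h t d σ α γ s * v (s - h) + σ * v s - Cfun t d σ β s * v s ^ 2) s) :
    (∀ s : ℝ, Tendsto (fun r => omegaFun t d σ r * v r)
        (nhdsWithin s (Set.Iio s)) (nhds (omegaFun t d σ s * v s))) ∧
    (∀ s : ℝ, (∀ k : ℤ, s ≠ t k) →
      HasDerivAt (fun r => omegaFun t d σ r * v r)
        (α (s - h) * Real.exp (-∫ u in (s - h)..s, γ u) *
            (omegaFun t d σ (s - h) * v (s - h)) -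
          β s * (omegaFun t d σ s * v s) ^ 2) s) ∧
    (∀ k : ℤ, Tendsto (fun r => omegaFun t d σ r * v r)
        (nhdsWithin (t k) (Set.Ioi (t k)))
        (nhds ((1 + d k) * (omegaFun t d σ (t k) * v (t k))))) :=
  change_of_variables_general h σ hh t htmono htfin d hd α β γ v hv hode
end

section
/- Let h > 0, σ ∈ ℝ, and let A, C : [0, ∞) → ℝ be piecewise continuous with 0 < A^L ≤ A(t) ≤ A^M, 0 < C^L ≤ C(t) ≤ C^M for all t ≥ 0, and A^L + σ > 0. Then every nonnegative continuous solution v : [−h, ∞) → ℝ of v′(t) = A(t) v(t−h) + σ v(t) − C(t) v(t)² (t > 0) with continuous initial function φ ≥ 0 on [−h, 0] and φ(0) > 0 satisfies liminf_{t→∞} v(t) ≥ (A^L + σ)/C^M and limsup_{t→∞} v(t) ≤ (A^M + σ)/C^L. -/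
open Filter Set Topology

/-!
The solution is squeezed between the right-hand sides of the two constant-coefficient comparison
equations: `G⁻(x, y) = A^L x + σ y - C^M y² ≤ v' ≤ G⁺(x, y) = A^M x + σ y - C^L y²`, where
`x = v (t - h)` and `y = v t`. A barrier argument (the first time `v` reaches a level) bounds `v`
above; an integrating factor keeps it positive, and a second barrier then bounds it below by a
positive constant. At `l = liminf v` one must have `G⁻(l, l) ≤ 0`: otherwise, once
`v (t - h) > l - η`, the derivative is at least `G⁻(l, l) / 2` whenever `v t` is near or below `l`,
so `v` either grows without bound or eventually stays above `l + η`. Since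
`G⁻(l, l) = l (A^L + σ - C^M l)` with `l > 0`, this is the liminf bound; applied to `-v`, the same
argument gives `G⁺(L, L) ≥ 0` at `L = limsup v`, which is the limsup bound.
-/

theorem HasDerivAt.eventually_nhdsGT_lt {f : ℝ → ℝ} {f' x : ℝ} (hf : HasDerivAt f f' x)
    (hf' : 0 < f') : ∀ᶠ y in 𝓝[>] x, f x < f y := by
  have hslope : Tendsto (slope f x) (𝓝[>] x) (𝓝 f') :=
    (hasDerivAt_iff_tendsto_slope.1 hf).mono_left (nhdsWithin_mono x fun y hy => ne_of_gt hy)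
  filter_upwards [hslope.eventually_const_lt hf', self_mem_nhdsWithin] with y hy hxy
  exact (slope_pos_iff hxy).1 hy

theorem le_of_forall_eq_hasDerivAt_pos {v : ℝ → ℝ} {a T m : ℝ} (hv : ContinuousOn v (Ici a))
    (haT : a ≤ T) (hinit : ∀ s ∈ Icc a T, m ≤ v s)
    (hcross : ∀ t, T ≤ t → v t = m → (∀ s ∈ Icc a t, m ≤ v s) →
      ∃ d, 0 < d ∧ HasDerivAt v d t) :
    ∀ t, a ≤ t → m ≤ v t := by
  intro b hab
  have hclosed : IsClosed ({s | m ≤ v s} ∩ Icc a b) := by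
    rw [inter_comm]
    exact (hv.mono Icc_subset_Ici_self).preimage_isClosed_of_isClosed isClosed_Icc isClosed_Ici
  refine hclosed.Icc_subset_of_forall_mem_nhdsGT_of_Icc_subset (hinit a ⟨le_rfl, haT⟩)
    (fun t ht hhist => ?_) ⟨hab, le_rfl⟩
  rcases lt_or_ge t T with htT | hTt
  · exact mem_of_superset (Icc_mem_nhdsGT_of_mem ⟨ht.1, htT⟩) hinit
  rcases (show m ≤ v t from hhist ⟨ht.1, le_rfl⟩).lt_or_eq with hlt | heq
  · have hnear : ∀ᶠ s in 𝓝[Ici a] t, m < v s := (hv t ht.1).eventually_const_lt hlt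
    filter_upwards [nhdsWithin_mono t (Ioi_subset_Ici ht.1) hnear] with s hs using hs.le
  · obtain ⟨d, hd, hder⟩ := hcross t hTt heq.symm hhist
    filter_upwards [hder.eventually_nhdsGT_lt hd] with s hs using heq.trans_lt hs |>.le

theorem eventually_ge_of_le_deriv_of_le {v w : ℝ → ℝ} {u c : ℝ} (hc : 0 < c)
    (hbdd : IsBoundedUnder (· ≤ ·) atTop v)
    (hv : ∀ᶠ t in atTop, HasDerivAt v (w t) t ∧ (v t ≤ u → c ≤ w t)) :
    ∀ᶠ t in atTop, u ≤ v t := by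
  obtain ⟨a, ha⟩ := eventually_atTop.1 hv
  have hcont : ContinuousOn v (Ici a) := fun t ht => (ha t ht).1.continuousAt.continuousWithinAt
  by_cases hreach : ∃ t₀, a ≤ t₀ ∧ u ≤ v t₀
  · obtain ⟨t₀, hat₀, ht₀⟩ := hreach
    refine eventually_atTop.2 ⟨t₀, le_of_forall_eq_hasDerivAt_pos
      (hcont.mono (Ici_subset_Ici.2 hat₀)) le_rfl ?_ ?_⟩
    · intro s hs
      rwa [le_antisymm hs.2 hs.1]
    · intro t ht hvt _
      have hat := hat₀.trans ht
      exact ⟨w t, hc.trans_le ((ha t hat).2 hvt.le), (ha t hat).1⟩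
  · push Not at hreach
    have hderiv : ∀ s, a ≤ s → HasDerivAt v (w s) s ∧ c ≤ w s := fun s hs =>
      ⟨(ha s hs).1, (ha s hs).2 (hreach s hs).le⟩
    have hgrowth : ∀ t, a ≤ t → v a + c * (t - a) ≤ v t := fun t ht => by
      have := (convex_Ici a).mul_sub_le_image_sub_of_le_deriv hcont
        (fun s hs => (hderiv s (interior_subset hs)).1.differentiableAt.differentiableWithinAt)
        (fun s hs => (hderiv s (interior_subset hs)).1.deriv ▸ (hderiv s (interior_subset hs)).2)
        a self_mem_Ici t ht ht
      linarith
    have hlin : Tendsto (fun t => v a + c * (t - a)) atTop atTop :=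
      tendsto_atTop_add_const_left _ _
        ((tendsto_atTop_add_const_right _ _ tendsto_id).const_mul_atTop hc)
    exact absurd hbdd (not_isBoundedUnder_of_tendsto_atTop
      (tendsto_atTop_mono' _ (eventually_atTop.2 ⟨a, hgrowth⟩) hlin))

theorem map_liminf_nonpos_of_le_deriv {v w : ℝ → ℝ} {G : ℝ → ℝ → ℝ} {h : ℝ}
    (hG : Continuous (Function.uncurry G)) (hGmono : ∀ y, Monotone fun x => G x y)
    (hbdd : IsBoundedUnder (· ≤ ·) atTop v) (hbdd' : IsBoundedUnder (· ≥ ·) atTop v)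
    (hv : ∀ᶠ t in atTop, HasDerivAt v (w t) t ∧ G (v (t - h)) (v t) ≤ w t) :
    G (liminf v atTop) (liminf v atTop) ≤ 0 := by
  set l := liminf v atTop
  by_contra! hpos
  obtain ⟨η, hη, hGη⟩ : ∃ η > 0, ∀ x y, |x - l| ≤ η → |y - l| ≤ η → G l l / 2 < G x y := by
    obtain ⟨ε, hε, hball⟩ := Metric.eventually_nhds_iff.1
      ((hG.tendsto (l, l)).eventually_const_lt (half_lt_self hpos))
    refine ⟨ε / 2, half_pos hε, fun x y hx hy => @hball (x, y) ?_⟩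
    rw [Prod.dist_eq, Real.dist_eq, Real.dist_eq]
    exact max_lt (by linarith) (by linarith)
  have hlow : ∀ᶠ t in atTop, l - η < v t := eventually_lt_of_lt_liminf (by linarith) hbdd'
  have hlow_delayed : ∀ᶠ t in atTop, l - η < v (t - h) :=
    (tendsto_atTop_add_const_right _ (-h) tendsto_id).eventually hlow
  have hup : ∀ᶠ t in atTop, l + η ≤ v t := by
    refine eventually_ge_of_le_deriv_of_le (w := w) (half_pos hpos) hbdd ?_
    filter_upwards [hv, hlow, hlow_delayed] with t ⟨hderiv, hw⟩ hvt hvth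
    refine ⟨hderiv, fun hvu => ?_⟩
    have hnear : G l l / 2 < G (l - η) (v t) :=
      hGη _ _ (by rw [sub_sub_cancel_left, abs_neg, abs_of_pos hη])
        (abs_le.2 ⟨by linarith, by linarith⟩)
    exact hnear.le.trans ((hGmono _ hvth.le).trans hw)
  have := le_liminf_of_le hbdd.isCoboundedUnder_ge hup
  linarith

theorem map_limsup_nonneg_of_deriv_le {v w : ℝ → ℝ} {G : ℝ → ℝ → ℝ} {h : ℝ}
    (hG : Continuous (Function.uncurry G)) (hGmono : ∀ y, Monotone fun x => G x y)
    (hbdd : IsBoundedUnder (· ≤ ·) atTop v) (hbdd' : IsBoundedUnder (· ≥ ·) atTop v)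
    (hv : ∀ᶠ t in atTop, HasDerivAt v (w t) t ∧ w t ≤ G (v (t - h)) (v t)) :
    0 ≤ G (limsup v atTop) (limsup v atTop) := by
  have hneg : liminf (-v) atTop = -limsup v atTop :=
    (Antitone.map_limsup_of_continuousAt (fun _ _ h => neg_le_neg h) v
      continuous_neg.continuousAt hbdd hbdd'.isCoboundedUnder_le).symm
  have := map_liminf_nonpos_of_le_deriv (v := -v) (w := -w) (G := fun x y => -G (-x) (-y))
    (by fun_prop) (fun y x x' hxx' => neg_le_neg (hGmono _ (neg_le_neg hxx')))
    (isBoundedUnder_le_neg.2 hbdd') (isBoundedUnder_ge_neg.2 hbdd)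
    (hv.mono fun t ⟨hderiv, hw⟩ => ⟨hderiv.neg, by simpa using hw⟩)
  simpa [hneg] using this

theorem pos_of_neg_mul_le_deriv {v w : ℝ → ℝ} {a K : ℝ} (hvc : ContinuousOn v (Ici a))
    (hv : ∀ t, a < t → HasDerivAt v (w t) t) (hw : ∀ t, a < t → -(K * v t) ≤ w t)
    (hva : 0 < v a) : ∀ t, a ≤ t → 0 < v t := by
  have hmono : MonotoneOn (fun t => v t * Real.exp (t * K)) (Ici a) := by
    refine monotoneOn_of_hasDerivWithinAt_nonneg (convex_Ici a)
      (f' := fun t => w t * Real.exp (t * K) + v t * (Real.exp (t * K) * K))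
      (hvc.mul (by fun_prop)) (fun t ht => ?_) (fun t ht => ?_)
    · rw [interior_Ici] at ht
      exact ((hv t ht).mul ((hasDerivAt_mul_const K).exp)).hasDerivWithinAt
    · rw [interior_Ici] at ht
      have := hw t ht
      have := Real.exp_pos (t * K)
      nlinarith
  intro t ht
  have hgrow := hmono self_mem_Ici ht ht
  have hpos : 0 < v a * Real.exp (a * K) := mul_pos hva (Real.exp_pos _)
  exact pos_of_mul_pos_left (hpos.trans_le hgrow) (Real.exp_pos _).le

/-- `uh` stands for the delayed value `u (t - h)`. -/
def delayLogistic (a σ c uh u : ℝ) : ℝ := a * uh + σ * u - c * u ^ 2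

theorem continuous_delayLogistic (a σ c : ℝ) :
    Continuous (Function.uncurry (delayLogistic a σ c)) := by
  unfold delayLogistic; fun_prop

theorem monotone_delayLogistic {a : ℝ} (ha : 0 ≤ a) (σ c u : ℝ) :
    Monotone fun uh => delayLogistic a σ c uh u :=
  fun _ _ huh => by unfold delayLogistic; nlinarith

theorem delayLogistic_mono {a a' c c' uh : ℝ} (ha : a ≤ a') (hc : c' ≤ c) (huh : 0 ≤ uh)
    (σ u : ℝ) : delayLogistic a σ c uh u ≤ delayLogistic a' σ c' uh u := by
  unfold delayLogistic
  nlinarith [mul_le_mul_of_nonneg_right hc (sq_nonneg u)]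

theorem delayLogistic_self (a σ c u : ℝ) : delayLogistic a σ c u u = u * (a + σ - c * u) := by
  unfold delayLogistic; ring

theorem exists_forall_le_of_deriv_le_delayLogistic {v w : ℝ → ℝ} {h a σ c : ℝ} (hh : 0 < h)
    (ha : 0 ≤ a) (hc : 0 < c) (hvc : ContinuousOn v (Ici (-h)))
    (hv : ∀ t, 0 < t → HasDerivAt v (w t) t)
    (hw : ∀ t, 0 < t → w t ≤ delayLogistic a σ c (v (t - h)) (v t)) :
    ∃ B, ∀ t, -h ≤ t → v t ≤ B := by
  obtain ⟨M, hM⟩ := (isCompact_Icc.bddAbove_image (hvc.mono Icc_subset_Ici_self) :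
    BddAbove (v '' Icc (-h) h))
  obtain ⟨B, hB0, hBc, hMB⟩ : ∃ B, 0 < B ∧ (a + σ) / c < B ∧ M ≤ B :=
    ((eventually_gt_atTop 0).and ((eventually_gt_atTop _).and (eventually_ge_atTop M))).exists
  refine ⟨B, fun t ht => neg_le_neg_iff.1 <| le_of_forall_eq_hasDerivAt_pos (v := fun t => -v t)
    hvc.neg (by linarith) (fun s hs => neg_le_neg ((hM (mem_image_of_mem v hs)).trans hMB))
    (fun t ht hvt hhist => ⟨-w t, ?_, (hv t (hh.trans_le ht)).neg⟩) t ht⟩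
  have hvt : v t = B := neg_inj.1 hvt
  have hvth : v (t - h) ≤ B := neg_le_neg_iff.1 (hhist (t - h) ⟨by linarith, by linarith⟩)
  have hcB : a + σ < c * B := by rwa [div_lt_iff₀' hc] at hBc
  have hwt : w t < 0 :=
    calc w t ≤ delayLogistic a σ c (v (t - h)) (v t) := hw t (hh.trans_le ht)
      _ ≤ delayLogistic a σ c B B := by rw [hvt]; exact monotone_delayLogistic ha σ c B hvth
      _ = B * (a + σ - c * B) := delayLogistic_self a σ c B
      _ < 0 := mul_neg_of_pos_of_neg hB0 (by linarith)
  exact neg_pos.2 hwt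

theorem exists_pos_forall_le_of_delayLogistic_le_deriv {v w : ℝ → ℝ} {h a σ c B : ℝ}
    (hh : 0 < h) (ha : 0 ≤ a) (haσ : 0 < a + σ) (hvc : ContinuousOn v (Ici 0))
    (hvnn : ∀ t, -h ≤ t → 0 ≤ v t) (hv0 : 0 < v 0) (hB : ∀ t, 0 ≤ t → v t ≤ B)
    (hv : ∀ t, 0 < t → HasDerivAt v (w t) t)
    (hw : ∀ t, 0 < t → delayLogistic a σ c (v (t - h)) (v t) ≤ w t) :
    ∃ m, 0 < m ∧ ∀ t, 0 ≤ t → m ≤ v t := by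
  have hpos : ∀ t, 0 ≤ t → 0 < v t := by
    refine pos_of_neg_mul_le_deriv (K := |σ| + |c| * B) hvc hv (fun t ht => ?_) hv0
    have hvt := hvnn t (by linarith)
    have hdelay : 0 ≤ a * v (t - h) := mul_nonneg ha (hvnn _ (by linarith))
    have hσ : -|σ| * v t ≤ σ * v t := mul_le_mul_of_nonneg_right (neg_abs_le σ) hvt
    have hc : c * v t ^ 2 ≤ |c| * B * v t := by
      calc c * v t ^ 2 ≤ |c| * v t ^ 2 := mul_le_mul_of_nonneg_right (le_abs_self c) (sq_nonneg _)
        _ = |c| * v t * v t := by ring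
        _ ≤ |c| * v t * B := mul_le_mul_of_nonneg_left (hB t ht.le) (by positivity)
        _ = |c| * B * v t := by ring
    have := hw t ht
    unfold delayLogistic at this
    linarith
  obtain ⟨t₀, ht₀, hmin⟩ := isCompact_Icc.exists_isMinOn (nonempty_Icc.2 hh.le)
    (hvc.mono Icc_subset_Ici_self)
  have hsmall : ∀ᶠ m in 𝓝[>] 0, c * m < a + σ ∧ m < v t₀ := by
    exact nhdsWithin_le_nhds (((continuous_const_mul c).tendsto' 0 0 (mul_zero c)).eventually
      (gt_mem_nhds haσ) |>.and (gt_mem_nhds (hpos t₀ ht₀.1)))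
  obtain ⟨m, ⟨hcm, hmv⟩, hm⟩ := (hsmall.and self_mem_nhdsWithin).exists
  refine ⟨m, hm, le_of_forall_eq_hasDerivAt_pos hvc hh.le
    (fun s hs => hmv.le.trans (hmin hs)) fun t ht hvt hhist => ⟨w t, ?_, hv t (hh.trans_le ht)⟩⟩
  have hvth : m ≤ v (t - h) := hhist (t - h) ⟨by linarith, by linarith⟩
  calc 0 < m * (a + σ - c * m) := mul_pos hm (by linarith)
    _ = delayLogistic a σ c m m := (delayLogistic_self a σ c m).symm
    _ ≤ delayLogistic a σ c (v (t - h)) (v t) := by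
      rw [hvt]; exact monotone_delayLogistic ha σ c m hvth
    _ ≤ w t := hw t (hh.trans_le ht)

theorem delay_logistic_permanence_general (h σ AL AM CL CM : ℝ) (hh : 0 < h)
    (A C : ℝ → ℝ)
    (hAL : 0 < AL) (hCL : 0 < CL) (hALσ : 0 < AL + σ)
    (hA : ∀ s : ℝ, 0 ≤ s → AL ≤ A s ∧ A s ≤ AM)
    (hC : ∀ s : ℝ, 0 ≤ s → CL ≤ C s ∧ C s ≤ CM)
    (v : ℝ → ℝ) (hvc : ContinuousOn v (Set.Ici (-h)))
    (hvnn : ∀ s : ℝ, -h ≤ s → 0 ≤ v s) (hv0 : 0 < v 0)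
    (hv : ∀ s : ℝ, 0 < s →
      HasDerivAt v (A s * v (s - h) + σ * v s - C s * v s ^ 2) s) :
    (AL + σ) / CM ≤ Filter.liminf v Filter.atTop ∧
      Filter.limsup v Filter.atTop ≤ (AM + σ) / CL := by
  set w : ℝ → ℝ := fun s => delayLogistic (A s) σ (C s) (v (s - h)) (v s)
  have hAM : 0 ≤ AM := hAL.le.trans ((hA 0 le_rfl).1.trans (hA 0 le_rfl).2)
  have hCM : 0 < CM := hCL.trans_le ((hC 0 le_rfl).1.trans (hC 0 le_rfl).2)
  have hlower : ∀ t, 0 < t → delayLogistic AL σ CM (v (t - h)) (v t) ≤ w t := fun t ht =>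
    delayLogistic_mono (hA t ht.le).1 (hC t ht.le).2 (hvnn _ (by linarith)) σ (v t)
  have hupper : ∀ t, 0 < t → w t ≤ delayLogistic AM σ CL (v (t - h)) (v t) := fun t ht =>
    delayLogistic_mono (hA t ht.le).2 (hC t ht.le).1 (hvnn _ (by linarith)) σ (v t)
  obtain ⟨B, hB⟩ := exists_forall_le_of_deriv_le_delayLogistic hh hAM hCL hvc hv hupper
  obtain ⟨m, hm, hmv⟩ := exists_pos_forall_le_of_delayLogistic_le_deriv hh hAL.le hALσ
    (hvc.mono (Ici_subset_Ici.2 (by linarith))) hvnn hv0 (fun t ht => hB t (by linarith)) hv hlower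
  have hmv' : ∀ᶠ t in atTop, m ≤ v t := eventually_atTop.2 ⟨0, hmv⟩
  have hbdd : IsBoundedUnder (· ≤ ·) atTop v :=
    isBoundedUnder_of_eventually_le (eventually_atTop.2 ⟨0, fun t ht => hB t (by linarith)⟩)
  have hbdd' : IsBoundedUnder (· ≥ ·) atTop v := isBoundedUnder_of_eventually_ge hmv'
  have hliminf := map_liminf_nonpos_of_le_deriv (continuous_delayLogistic AL σ CM)
    (monotone_delayLogistic hAL.le σ CM) hbdd hbdd'
    (eventually_gt_atTop 0 |>.mono fun t ht => ⟨hv t ht, hlower t ht⟩)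
  have hlimsup := map_limsup_nonneg_of_deriv_le (continuous_delayLogistic AM σ CL)
    (monotone_delayLogistic hAM σ CL) hbdd hbdd'
    (eventually_gt_atTop 0 |>.mono fun t ht => ⟨hv t ht, hupper t ht⟩)
  have hl : 0 < liminf v atTop := hm.trans_le (le_liminf_of_le hbdd.isCoboundedUnder_ge hmv')
  rw [delayLogistic_self] at hliminf hlimsup
  constructor
  · rw [div_le_iff₀ hCM]
    linarith [nonpos_of_mul_nonpos_right hliminf hl]
  · rw [le_div_iff₀ hCL]
    linarith [nonneg_of_mul_nonneg_right hlimsup (hl.trans_le (liminf_le_limsup hbdd hbdd'))]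

/-- **The permanence bounds (26).** If `0 < A^L ≤ A(t) ≤ A^M`, `0 < C^L ≤ C(t) ≤ C^M` and
`A^L + σ > 0`, then every nonnegative continuous solution of
`v' = A(t) v(·-h) + σ v - C(t) v²` with `φ ≥ 0`, `φ(0) > 0` satisfies
`liminf v ≥ (A^L + σ)/C^M` and `limsup v ≤ (A^M + σ)/C^L`. -/
theorem delay_logistic_permanence (h σ AL AM CL CM : ℝ) (hh : 0 < h)
    (A C : ℝ → ℝ) (hApc : PiecewiseContinuousFn A) (hCpc : PiecewiseContinuousFn C)
    (hAL : 0 < AL) (hCL : 0 < CL) (hALσ : 0 < AL + σ)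
    (hA : ∀ s : ℝ, 0 ≤ s → AL ≤ A s ∧ A s ≤ AM)
    (hC : ∀ s : ℝ, 0 ≤ s → CL ≤ C s ∧ C s ≤ CM)
    (v : ℝ → ℝ) (hvc : ContinuousOn v (Set.Ici (-h)))
    (hvnn : ∀ s : ℝ, -h ≤ s → 0 ≤ v s) (hv0 : 0 < v 0)
    (hv : ∀ s : ℝ, 0 < s →
      HasDerivAt v (A s * v (s - h) + σ * v s - C s * v s ^ 2) s) :
    (AL + σ) / CM ≤ Filter.liminf v Filter.atTop ∧
      Filter.limsup v Filter.atTop ≤ (AM + σ) / CL :=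
  delay_logistic_permanence_general h σ AL AM CL CM hh A C hAL hCL hALσ hA hC v hvc hvnn hv0 hv
end

section
/- Let a > 0, c > 0, h > 0 and σ ∈ ℝ with a + σ > 0. Then every continuous solution v : [−h, ∞) → ℝ of the constant-coefficient delay logistic equation v′(t) = a v(t−h) + σ v(t) − c v(t)² (t > 0) with continuous nonnegative initial function φ on [−h, 0] satisfying φ(0) > 0 remains positive for t > 0 and converges: v(t) → (a + σ)/c as t → ∞. In particular, (a+σ)/c is the unique positive equilibrium of this equation. -/
/-!
At the first time `t` at which a solution reaches a level `M`, its past lies below `M`, so the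
positive coefficient of the delayed term gives `v'(t) ≤ a M + σ M - c M²`. Comparisons at such first
hitting times yield a global upper bound `B`, positivity (applied to `v(t) e^{(cB - σ)t}`) and a
positive lower bound. For the limit, let `L = limsup v` and `ℓ = liminf v`. If eventually `v < K`,
then eventually `v < M` as soon as `a K + σ M - c M² < 0` and `σ ≤ 2 c M`, because `v'` is then
bounded above by a negative constant wherever `v ≥ M`; taking `K` and `M` close to `L` forces
`L (a + σ - c L) ≥ 0`, that is `L ≤ (a + σ) / c`. Symmetrically `ℓ ≥ (a + σ) / c`.
-/

open Filter Set Topology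

theorem forall_lt_of_deriv_neg_at_first_hit {v D : ℝ → ℝ} {T₀ T M : ℝ} (hT : T₀ ≤ T)
    (hvc : ContinuousOn v (Ici T₀)) (hv : ∀ t, T < t → HasDerivAt v (D t) t)
    (hinit : ∀ t ∈ Icc T₀ T, v t < M)
    (hhit : ∀ t, T < t → (∀ s ∈ Ico T₀ t, v s < M) → v t = M → D t < 0) :
    ∀ t, T₀ ≤ t → v t < M := by
  by_contra! hcon
  obtain ⟨t₁, ht₁, hMt₁⟩ := hcon
  set S := Ici T₀ ∩ v ⁻¹' Ici M
  have hSbdd : BddBelow S := ⟨T₀, fun _ hx ↦ hx.1⟩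
  set t₂ := sInf S
  obtain ⟨hT₀t₂, hMt₂⟩ : t₂ ∈ S :=
    (hvc.preimage_isClosed_of_isClosed isClosed_Ici isClosed_Ici).csInf_mem ⟨t₁, ht₁, hMt₁⟩ hSbdd
  have hbefore : ∀ s ∈ Ico T₀ t₂, v s < M := fun s hs ↦
    not_le.1 fun hMs ↦ (csInf_le hSbdd ⟨hs.1, hMs⟩).not_gt hs.2
  have hTt₂ : T < t₂ := not_le.1 fun h ↦ (hinit t₂ ⟨hT₀t₂, h⟩).not_ge hMt₂
  have hleft : ∀ᶠ s in 𝓝[<] t₂, v s < M := by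
    filter_upwards [Ioo_mem_nhdsLT hTt₂] with s hs using hbefore s ⟨hT.trans hs.1.le, hs.2⟩
  have hvt₂ : v t₂ = M := le_antisymm
    (le_of_tendsto ((hv t₂ hTt₂).continuousAt.tendsto.mono_left (nhdsWithin_le_nhds (s := Iio t₂)))
      (hleft.mono fun _ h ↦ h.le)) hMt₂
  have hslope : 0 ≤ D t₂ := by
    refine ge_of_tendsto ((hasDerivAt_iff_tendsto_slope.1 (hv t₂ hTt₂)).mono_left
      (nhdsWithin_mono t₂ fun _ hs ↦ ne_of_lt (mem_Iio.1 hs) : 𝓝[<] t₂ ≤ 𝓝[≠] t₂)) ?_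
    filter_upwards [hleft, self_mem_nhdsWithin] with s hs hst
    rw [slope_def_field]
    exact div_nonneg_of_nonpos (by linarith) (sub_nonpos.2 (le_of_lt hst))
  exact (hhit t₂ hTt₂ hbefore hvt₂).not_ge hslope

theorem forall_gt_of_deriv_pos_at_first_hit {v D : ℝ → ℝ} {T₀ T m : ℝ} (hT : T₀ ≤ T)
    (hvc : ContinuousOn v (Ici T₀)) (hv : ∀ t, T < t → HasDerivAt v (D t) t)
    (hinit : ∀ t ∈ Icc T₀ T, m < v t)
    (hhit : ∀ t, T < t → (∀ s ∈ Ico T₀ t, m < v s) → v t = m → 0 < D t) :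
    ∀ t, T₀ ≤ t → m < v t := by
  have := forall_lt_of_deriv_neg_at_first_hit (v := -v) (D := -D) (M := -m) hT hvc.neg
    (fun t ht ↦ (hv t ht).neg) (fun t ht ↦ neg_lt_neg (hinit t ht))
    fun t ht hbefore hvt ↦ neg_neg_of_pos <|
      hhit t ht (fun s hs ↦ neg_lt_neg_iff.1 (hbefore s hs)) (neg_inj.1 hvt)
  exact fun t ht ↦ neg_lt_neg_iff.1 (this t ht)

theorem eventually_lt_of_deriv_le_neg {v D : ℝ → ℝ} {T M η : ℝ} (hη : 0 < η)
    (hv : ∀ t, T ≤ t → HasDerivAt v (D t) t) (hD : ∀ t, T ≤ t → M ≤ v t → D t ≤ -η) :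
    ∀ᶠ t in atTop, v t < M := by
  have hvc : ContinuousOn v (Ici T) := fun t ht ↦ (hv t ht).continuousAt.continuousWithinAt
  obtain ⟨t₁, hTt₁, hvt₁⟩ : ∃ t₁, T ≤ t₁ ∧ v t₁ < M := by
    by_contra! hge
    have hdecay : ∀ t, T ≤ t → v t - v T ≤ -η * (t - T) := fun t ht ↦
      (convex_Ici T).image_sub_le_mul_sub_of_deriv_le hvc
        (fun s hs ↦ (hv s (interior_subset hs)).differentiableAt.differentiableWithinAt)
        (fun s hs ↦ (hv s (interior_subset hs)).deriv ▸
          hD s (interior_subset hs) (hge s (interior_subset hs)))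
        T (mem_Ici.2 le_rfl) t ht ht
    set t := T + (v T - M) / η + 1
    have hTt : T ≤ t := by linarith [div_nonneg (sub_nonneg.2 (hge T le_rfl)) hη.le]
    have hdrop : -η * (t - T) = M - v T - η := by simp only [t]; field_simp; ring
    linarith [hdecay t hTt, hge t hTt]
  refine eventually_atTop.2 ⟨t₁, forall_lt_of_deriv_neg_at_first_hit le_rfl
    (hvc.mono (Ici_subset_Ici.2 hTt₁)) (fun t ht ↦ hv t (hTt₁.trans ht.le))
    (fun t ht ↦ le_antisymm ht.2 ht.1 ▸ hvt₁) fun t ht _ hvt ↦ ?_⟩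
  linarith [hD t (hTt₁.trans ht.le) hvt.ge]

theorem eventually_gt_of_deriv_ge_pos {v D : ℝ → ℝ} {T m η : ℝ} (hη : 0 < η)
    (hv : ∀ t, T ≤ t → HasDerivAt v (D t) t) (hD : ∀ t, T ≤ t → v t ≤ m → η ≤ D t) :
    ∀ᶠ t in atTop, m < v t := by
  have := eventually_lt_of_deriv_le_neg (v := -v) (D := -D) (M := -m) hη
    (fun t ht ↦ (hv t ht).neg) fun t ht hvt ↦ neg_le_neg (hD t ht (neg_le_neg_iff.1 hvt))
  exact this.mono fun t ht ↦ neg_lt_neg_iff.1 ht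

namespace DelayLogistic

variable {a c h σ : ℝ} {v : ℝ → ℝ}

theorem exists_forall_lt (ha : 0 ≤ a) (hc : 0 < c) (hh : 0 < h)
    (hvc : ContinuousOn v (Ici (-h)))
    (hv : ∀ s, 0 < s → HasDerivAt v (a * v (s - h) + σ * v s - c * v s ^ 2) s) :
    ∃ B, ∀ t, -h ≤ t → v t < B := by
  obtain ⟨B₀, hB₀⟩ := (isCompact_Icc.image_of_continuousOn (hvc.mono Icc_subset_Ici_self)).bddAbove
  set B := max B₀ (|a + σ| / c) + 1
  have hB : |a + σ| / c + 1 ≤ B := by simp only [B]; linarith [le_max_right B₀ (|a + σ| / c)]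
  have hB0 : 0 < B := by linarith [div_nonneg (abs_nonneg (a + σ)) hc.le]
  have hcB : a + σ < c * B := by
    have := (div_lt_iff₀' hc).1 (show |a + σ| / c < B by linarith)
    linarith [le_abs_self (a + σ)]
  refine ⟨B, forall_lt_of_deriv_neg_at_first_hit (by linarith) hvc hv (fun t ht ↦ ?_)
    fun t ht hbefore hvt ↦ ?_⟩
  · linarith [hB₀ ⟨t, ht, rfl⟩, le_max_left B₀ (|a + σ| / c)]
  · have hdel := hbefore (t - h) ⟨by linarith, by linarith⟩
    rw [hvt]
    nlinarith [mul_le_mul_of_nonneg_left hdel.le ha]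

theorem pos_of_forall_lt (ha : 0 ≤ a) (hc : 0 < c) (hh : 0 < h)
    (hvc : ContinuousOn v (Ici (-h)))
    (hv : ∀ s, 0 < s → HasDerivAt v (a * v (s - h) + σ * v s - c * v s ^ 2) s)
    {B : ℝ} (hB : ∀ t, -h ≤ t → v t < B) (hvnn : ∀ θ ∈ Icc (-h) 0, 0 ≤ v θ) (hv0 : 0 < v 0) :
    ∀ t, 0 ≤ t → 0 < v t := by
  -- the integrating factor turns `σ v - c v²` into `c v (B - v)`, positive while `0 < v < B`
  set u : ℝ → ℝ := fun t ↦ v t * Real.exp ((c * B - σ) * t)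
  have hu_pos : ∀ t, 0 < u t ↔ 0 < v t := fun t ↦ mul_pos_iff_of_pos_right (Real.exp_pos _)
  have hu : ∀ t, 0 < t →
      HasDerivAt u ((a * v (t - h) + c * v t * (B - v t)) * Real.exp ((c * B - σ) * t)) t := by
    intro t ht
    refine ((hv t ht).fun_mul ((hasDerivAt_id t).const_mul (c * B - σ)).exp).congr_deriv ?_
    simp only [id]; ring
  have hu_gt : ∀ t, 0 ≤ t → v 0 / 2 < u t := by
    refine forall_gt_of_deriv_pos_at_first_hit le_rfl ?_ hu (fun t ht ↦ ?_)
      fun t ht hbefore hut ↦ ?_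
    · exact (hvc.mono (Ici_subset_Ici.2 (by linarith))).mul (by fun_prop)
    · obtain rfl : t = 0 := le_antisymm ht.2 ht.1
      simp only [u, mul_zero, Real.exp_zero, mul_one]
      linarith
    · have hvt : 0 < v t := (hu_pos t).1 (by linarith)
      have hdel : 0 ≤ v (t - h) := by
        rcases le_or_gt (t - h) 0 with hle | hlt
        · exact hvnn _ ⟨by linarith, hle⟩
        · exact ((hu_pos _).1 ((half_pos hv0).trans (hbefore _ ⟨hlt.le, by linarith⟩))).le
      have hlogistic : 0 < c * v t * (B - v t) :=
        mul_pos (mul_pos hc hvt) (sub_pos.2 (hB t (by linarith)))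
      exact mul_pos (add_pos_of_nonneg_of_pos (mul_nonneg ha hdel) hlogistic) (Real.exp_pos _)
  exact fun t ht ↦ (hu_pos t).1 ((half_pos hv0).trans (hu_gt t ht))

theorem exists_pos_forall_lt (ha : 0 ≤ a) (hc : 0 < c) (hh : 0 < h) (haσ : 0 < a + σ)
    (hvc : ContinuousOn v (Ici (-h)))
    (hv : ∀ s, 0 < s → HasDerivAt v (a * v (s - h) + σ * v s - c * v s ^ 2) s)
    (hpos : ∀ t, 0 ≤ t → 0 < v t) :
    ∃ δ, 0 < δ ∧ ∀ t, 0 ≤ t → δ < v t := by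
  have hvc₀ : ContinuousOn v (Ici 0) := hvc.mono (Ici_subset_Ici.2 (by linarith))
  obtain ⟨t₀, ht₀, hmin⟩ :=
    isCompact_Icc.exists_isMinOn (nonempty_Icc.2 hh.le) (hvc₀.mono Icc_subset_Ici_self)
  obtain ⟨δ, hδ, hδv, hcδ⟩ : ∃ δ, 0 < δ ∧ δ < v t₀ ∧ c * δ < a + σ := by
    have hx := (lt_div_iff₀' hc).1 (half_lt_self (div_pos haσ hc))
    have hv₀ := half_lt_self (hpos t₀ ht₀.1)
    refine ⟨min (v t₀ / 2) ((a + σ) / c / 2), lt_min (by linarith) (by positivity),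
      (min_le_left _ _).trans_lt hv₀, ?_⟩
    linarith [mul_le_mul_of_nonneg_left (min_le_right (v t₀ / 2) ((a + σ) / c / 2)) hc.le]
  refine ⟨δ, hδ, forall_gt_of_deriv_pos_at_first_hit hh.le hvc₀
    (fun t ht ↦ hv t (hh.trans ht)) (fun t ht ↦ hδv.trans_le (hmin ht)) fun t ht hbefore hvt ↦ ?_⟩
  have hdel := hbefore (t - h) ⟨by linarith, by linarith⟩
  rw [hvt]
  nlinarith [mul_le_mul_of_nonneg_left hdel.le ha, mul_pos hδ (sub_pos.2 hcδ)]

theorem eventually_lt_of_eventually_lt (ha : 0 ≤ a) (hc : 0 ≤ c)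
    (hv : ∀ s, 0 < s → HasDerivAt v (a * v (s - h) + σ * v s - c * v s ^ 2) s)
    {K M : ℝ} (hσM : σ ≤ 2 * c * M) (hKM : a * K + σ * M - c * M ^ 2 < 0)
    (hvK : ∀ᶠ t in atTop, v t < K) : ∀ᶠ t in atTop, v t < M := by
  obtain ⟨T₀, hT₀⟩ := eventually_atTop.1 hvK
  refine eventually_lt_of_deriv_le_neg (T := max (T₀ + |h|) 1) (neg_pos.2 hKM)
    (fun t ht ↦ hv t (by linarith [le_max_right (T₀ + |h|) 1])) fun t ht hMt ↦ ?_
  have hdel := (hT₀ (t - h) (by linarith [le_max_left (T₀ + |h|) 1, le_abs_self h])).le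
  -- `y ↦ σ y - c y²` is nonincreasing on `[σ / 2c, ∞)`
  have hmono : 0 ≤ (v t - M) * (c * (v t + M) - σ) :=
    mul_nonneg (sub_nonneg.2 hMt) (by nlinarith)
  nlinarith [mul_le_mul_of_nonneg_left hdel ha]

theorem eventually_gt_of_eventually_gt (ha : 0 < a) (hc : 0 ≤ c)
    (hv : ∀ s, 0 < s → HasDerivAt v (a * v (s - h) + σ * v s - c * v s ^ 2) s)
    {k m : ℝ} (hk : 0 < k) (hkm : 0 < a * k + σ * m - c * m ^ 2)
    (hv0 : ∀ᶠ t in atTop, 0 ≤ v t) (hvk : ∀ᶠ t in atTop, k < v t) :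
    ∀ᶠ t in atTop, m < v t := by
  rcases le_or_gt m k with hmk | hkm'
  · exact hvk.mono fun t ht ↦ hmk.trans_lt ht
  obtain ⟨T₀, hT₀⟩ := eventually_atTop.1 (hv0.and hvk)
  set η := min (a * k) (a * k + σ * m - c * m ^ 2)
  refine eventually_gt_of_deriv_ge_pos (T := max (T₀ + |h|) 1) (lt_min (mul_pos ha hk) hkm)
    (fun t ht ↦ hv t (by linarith [le_max_right (T₀ + |h|) 1])) fun t ht hvm ↦ ?_
  have hdel := (hT₀ (t - h) (by linarith [le_max_left (T₀ + |h|) 1, le_abs_self h])).2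
  have hvt := (hT₀ t (by linarith [le_max_left (T₀ + |h|) 1, abs_nonneg h])).1
  -- concavity: on `[0, m]`, `y ↦ a k + σ y - c y²` is at least its smaller endpoint value
  have hconc : η ≤ a * k + σ * v t - c * v t ^ 2 := by
    have hm := hk.trans hkm'
    refine sub_nonneg.1 (nonneg_of_mul_nonneg_right (a := m) ?_ hm)
    rw [show m * (a * k + σ * v t - c * v t ^ 2 - η) = (m - v t) * (a * k - η)
      + v t * (a * k + σ * m - c * m ^ 2 - η) + c * m * (v t * (m - v t)) by ring]
    exact add_nonneg (add_nonneg (mul_nonneg (sub_nonneg.2 hvm) (sub_nonneg.2 (min_le_left _ _)))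
      (mul_nonneg hvt (sub_nonneg.2 (min_le_right _ _))))
      (mul_nonneg (mul_nonneg hc hm.le) (mul_nonneg hvt (sub_nonneg.2 hvm)))
  nlinarith [mul_lt_mul_of_pos_left hdel ha]

theorem limsup_le (ha : 0 ≤ a) (hc : 0 < c) (haσ : 0 < a + σ)
    (hv : ∀ s, 0 < s → HasDerivAt v (a * v (s - h) + σ * v s - c * v s ^ 2) s)
    {B : ℝ} (hvB : ∀ᶠ t in atTop, v t ≤ B) (hv0 : ∀ᶠ t in atTop, 0 ≤ v t) :
    limsup v atTop ≤ (a + σ) / c := by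
  set L := limsup v atTop
  by_contra! hL
  have hL0 : 0 < L := (div_pos haσ hc).trans hL
  have hcL : a + σ < c * L := (div_lt_iff₀' hc).1 hL
  obtain ⟨η, ⟨hKM, hσM⟩, hη⟩ : ∃ η, (a * (L + η) + σ * (L - η) - c * (L - η) ^ 2 < 0 ∧
      σ < 2 * c * (L - η)) ∧ 0 < η := by
    refine ((eventually_nhdsWithin_of_eventually_nhds ?_).and self_mem_nhdsWithin).exists
      (f := 𝓝[>] (0 : ℝ))
    refine (ContinuousAt.eventually_lt (by fun_prop) continuousAt_const ?_).and
      (ContinuousAt.eventually_lt continuousAt_const (by fun_prop) ?_) <;>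
    simp only [add_zero, sub_zero] <;> nlinarith
  have hvM := eventually_lt_of_eventually_lt ha hc.le hv hσM.le hKM
    (eventually_lt_of_limsup_lt (by linarith) (isBoundedUnder_of_eventually_le hvB))
  have : L ≤ L - η :=
    limsup_le_of_le (isCoboundedUnder_le_of_eventually_le _ hv0) (hvM.mono fun _ h ↦ h.le)
  linarith

theorem le_liminf (ha : 0 < a) (hc : 0 < c)
    (hv : ∀ s, 0 < s → HasDerivAt v (a * v (s - h) + σ * v s - c * v s ^ 2) s)
    {B δ : ℝ} (hδ : 0 < δ) (hvB : ∀ᶠ t in atTop, v t ≤ B) (hvδ : ∀ᶠ t in atTop, δ ≤ v t) :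
    (a + σ) / c ≤ liminf v atTop := by
  set ℓ := liminf v atTop
  by_contra! hℓ
  have hℓδ : δ ≤ ℓ := le_liminf_of_le (isCoboundedUnder_ge_of_eventually_le _ hvB) hvδ
  have hcℓ : c * ℓ < a + σ := (lt_div_iff₀' hc).1 hℓ
  obtain ⟨η, ⟨hk, hkm⟩, hη⟩ : ∃ η, (0 < ℓ - η ∧
      0 < a * (ℓ - η) + σ * (ℓ + η) - c * (ℓ + η) ^ 2) ∧ 0 < η := by
    refine ((eventually_nhdsWithin_of_eventually_nhds ?_).and self_mem_nhdsWithin).exists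
      (f := 𝓝[>] (0 : ℝ))
    refine (ContinuousAt.eventually_lt continuousAt_const (by fun_prop) ?_).and
      (ContinuousAt.eventually_lt continuousAt_const (by fun_prop) ?_) <;>
    simp only [add_zero, sub_zero] <;> nlinarith
  have hvm := eventually_gt_of_eventually_gt ha hc.le hv hk hkm
    (hvδ.mono fun _ h ↦ hδ.le.trans h)
    (eventually_lt_of_lt_liminf (by linarith) (isBoundedUnder_of_eventually_ge hvδ))
  have : ℓ + η ≤ ℓ :=
    le_liminf_of_le (isCoboundedUnder_ge_of_eventually_le _ hvB) (hvm.mono fun _ h ↦ h.le)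
  linarith

end DelayLogistic

/-- **Global stability of the positive equilibrium of the delay logistic equation.**
For `a, c > 0`, `a + σ > 0`, every continuous solution of `v' = a v(·-h) + σ v - c v²`
with nonnegative initial function and `φ(0) = v(0) > 0` stays positive and converges to
`(a + σ)/c`, which is the unique positive equilibrium. -/
theorem delay_logistic_global_stability (a c h σ : ℝ) (ha : 0 < a) (hc : 0 < c)
    (hh : 0 < h) (haσ : 0 < a + σ)
    (v : ℝ → ℝ) (hvc : ContinuousOn v (Set.Ici (-h)))
    (hvnn : ∀ θ ∈ Set.Icc (-h) (0:ℝ), 0 ≤ v θ) (hv0 : 0 < v 0)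
    (hv : ∀ s : ℝ, 0 < s → HasDerivAt v (a * v (s - h) + σ * v s - c * v s ^ 2) s) :
    (∀ s : ℝ, 0 < s → 0 < v s) ∧
      Tendsto v atTop (nhds ((a + σ) / c)) ∧
      ∀ e : ℝ, 0 < e → (a * e + σ * e - c * e ^ 2 = 0 ↔ e = (a + σ) / c) := by
  obtain ⟨B, hB⟩ := DelayLogistic.exists_forall_lt ha.le hc hh hvc hv
  have hpos := DelayLogistic.pos_of_forall_lt ha.le hc hh hvc hv hB hvnn hv0
  obtain ⟨δ, hδ, hδv⟩ := DelayLogistic.exists_pos_forall_lt ha.le hc hh haσ hvc hv hpos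
  have hvB : ∀ᶠ t in atTop, v t ≤ B := eventually_atTop.2 ⟨0, fun t ht ↦ (hB t (by linarith)).le⟩
  have hvδ : ∀ᶠ t in atTop, δ ≤ v t := eventually_atTop.2 ⟨0, fun t ht ↦ (hδv t ht).le⟩
  refine ⟨fun s hs ↦ hpos s hs.le, ?_, fun e he ↦ ?_⟩
  · exact tendsto_of_le_liminf_of_limsup_le (DelayLogistic.le_liminf ha hc hv hδ hvB hvδ)
      (DelayLogistic.limsup_le ha.le hc haσ hv hvB (hvδ.mono fun _ h ↦ hδ.le.trans h))
      (isBoundedUnder_of_eventually_le hvB) (isBoundedUnder_of_eventually_ge hvδ)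
  · rw [show a * e + σ * e - c * e ^ 2 = e * (a + σ - c * e) by ring, mul_eq_zero,
      eq_div_iff hc.ne', or_iff_right he.ne']
    constructor <;> intro h <;> linarith
end

section
/- Let h > 0 and let A, B : [0, ∞) → ℝ be piecewise continuous functions with 0 ≤ A(t) for all t, sup_{t≥0} A(t) < inf_{t≥0} B(t), and B bounded above. Then every continuous solution w : [−h, ∞) → ℝ of the linear delay equation w′(t) = A(t) w(t−h) − B(t) w(t) (t > 0) with bounded continuous initial function on [−h, 0] satisfies w(t) → 0 as t → ∞. -/
open Filter Set Topology

/-!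
Let `0 ≤ A ≤ a < b ≤ B`. Where `w` touches a barrier `φ ≥ 0` from below, the equation gives
`w' ≤ a M - b φ`, `M` bounding the delayed values `|w (· - h)|`; so a barrier with
`φ' > a M - b φ` is never crossed, and applying this to `w` and `-w` bounds `|w|`.
Constant barriers, used on successive intervals of length `h`, show that a bound on `|w|` over
one delay interval persists forever. The barrier `a M / b + M e^{-b (t - s)}` then shows that
after a further time `h + T` the bound `M` improves to `q M` with `q = a / b + e^{-b T} < 1`,
and iterating gives geometric decay.
-/

open Real

def SolvesDelayEq (h : ℝ) (A B w : ℝ → ℝ) : Prop :=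
  ∀ s, 0 < s → HasDerivAt w (A s * w (s - h) - B s * w s) s

namespace SolvesDelayEq

variable {h a b : ℝ} {A B w : ℝ → ℝ}

theorem neg (hw : SolvesDelayEq h A B w) : SolvesDelayEq h A B (-w) := fun s hs => by
  have hrhs : A s * (-w) (s - h) - B s * (-w) s = -(A s * w (s - h) - B s * w s) := by
    simp only [Pi.neg_apply]; ring
  exact hrhs ▸ (hw s hs).neg

theorem le_of_barrier (hw : SolvesDelayEq h A B w) (hA0 : ∀ s, 0 ≤ s → 0 ≤ A s)
    (hAa : ∀ s, 0 ≤ s → A s ≤ a) (hbB : ∀ s, 0 ≤ s → b ≤ B s)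
    {σ τ M : ℝ} {φ φ' : ℝ → ℝ} (hσ : 0 < σ) (hdel : ∀ x ∈ Ico σ τ, |w (x - h)| ≤ M)
    (hφ : ∀ x, HasDerivAt φ (φ' x) x) (hφ0 : ∀ x ∈ Ico σ τ, 0 ≤ φ x)
    (hφ' : ∀ x ∈ Ico σ τ, a * M - b * φ x < φ' x) (hσφ : w σ ≤ φ σ) :
    ∀ t ∈ Icc σ τ, w t ≤ φ t := by
  have hpos : ∀ x ∈ Icc σ τ, 0 < x := fun x hx => hσ.trans_le hx.1
  refine image_le_of_deriv_right_lt_deriv_boundary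
    (fun x hx => (hw x (hpos x hx)).continuousAt.continuousWithinAt)
    (fun x hx => (hw x (hpos x (Ico_subset_Icc_self hx))).hasDerivWithinAt) hσφ hφ ?_
  intro x hx hwφ
  have hx0 : 0 ≤ x := (hpos x (Ico_subset_Icc_self hx)).le
  have hdelay : A x * w (x - h) ≤ a * M :=
    calc A x * w (x - h) ≤ A x * M :=
          mul_le_mul_of_nonneg_left (le_of_abs_le (hdel x hx)) (hA0 x hx0)
      _ ≤ a * M := mul_le_mul_of_nonneg_right (hAa x hx0) ((abs_nonneg _).trans (hdel x hx))
  have hdamp : b * φ x ≤ B x * w x :=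
    hwφ.symm ▸ mul_le_mul_of_nonneg_right (hbB x hx0) (hφ0 x hx)
  linarith [hφ' x hx]

theorem abs_le_of_barrier (hw : SolvesDelayEq h A B w) (hA0 : ∀ s, 0 ≤ s → 0 ≤ A s)
    (hAa : ∀ s, 0 ≤ s → A s ≤ a) (hbB : ∀ s, 0 ≤ s → b ≤ B s)
    {σ τ M : ℝ} {φ φ' : ℝ → ℝ} (hσ : 0 < σ) (hdel : ∀ x ∈ Ico σ τ, |w (x - h)| ≤ M)
    (hφ : ∀ x, HasDerivAt φ (φ' x) x) (hφ0 : ∀ x ∈ Ico σ τ, 0 ≤ φ x)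
    (hφ' : ∀ x ∈ Ico σ τ, a * M - b * φ x < φ' x) (hσφ : |w σ| ≤ φ σ) :
    ∀ t ∈ Icc σ τ, |w t| ≤ φ t := fun t ht =>
  abs_le'.mpr
    ⟨hw.le_of_barrier hA0 hAa hbB hσ hdel hφ hφ0 hφ' (le_of_abs_le hσφ) t ht,
      hw.neg.le_of_barrier hA0 hAa hbB hσ (by simpa only [Pi.neg_apply, abs_neg] using hdel)
        hφ hφ0 hφ' (neg_le.mp (neg_le_of_abs_le hσφ)) t ht⟩

theorem abs_le_of_abs_le_on_Icc (hw : SolvesDelayEq h A B w) (hA0 : ∀ s, 0 ≤ s → 0 ≤ A s)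
    (hAa : ∀ s, 0 ≤ s → A s ≤ a) (hbB : ∀ s, 0 ≤ s → b ≤ B s) (hab : a < b) (hh : 0 < h)
    {t₀ M : ℝ} (ht₀ : 0 < t₀) (hM : ∀ s ∈ Icc (t₀ - h) t₀, |w s| ≤ M) :
    ∀ t, t₀ - h ≤ t → |w t| ≤ M := by
  have hM0 : 0 ≤ M := (abs_nonneg _).trans (hM t₀ ⟨by linarith, le_rfl⟩)
  have hsteps : ∀ ε > 0, ∀ n : ℕ, ∀ t ∈ Icc (t₀ - h) (t₀ + n * h), |w t| ≤ M + ε := by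
    intro ε hε n
    induction n with
    | zero =>
      intro t ht
      linarith [hM t (by simpa using ht)]
    | succ n ih =>
      intro t ht
      rcases le_or_gt t (t₀ + n * h) with hle | hlt
      · exact ih t ⟨ht.1, hle⟩
      have hnh : 0 ≤ n * h := by positivity
      have htn : t ≤ t₀ + n * h + h := by push_cast at ht; linarith [ht.2]
      have hdel : ∀ x ∈ Ico (t₀ + n * h) t, |w (x - h)| ≤ M + ε := fun x hx =>
        ih _ ⟨by linarith [hx.1], by linarith [hx.2]⟩
      have hgap : 0 < (b - a) * (M + ε) := mul_pos (sub_pos.mpr hab) (by positivity)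
      exact hw.abs_le_of_barrier hA0 hAa hbB (φ := fun _ => M + ε) (φ' := fun _ => 0)
        (by positivity) hdel (fun x => hasDerivAt_const x _) (fun _ _ => by positivity)
        (fun _ _ => by linarith) (ih _ ⟨by linarith, le_rfl⟩) t ⟨hlt.le, le_rfl⟩
  intro t ht
  obtain ⟨n, hn⟩ := exists_nat_ge ((t - t₀) / h)
  rw [div_le_iff₀ hh] at hn
  exact le_of_forall_pos_le_add fun ε hε => hsteps ε hε n t ⟨ht, by linarith⟩

theorem abs_le_exp_decay (hw : SolvesDelayEq h A B w) (hA0 : ∀ s, 0 ≤ s → 0 ≤ A s)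
    (hAa : ∀ s, 0 ≤ s → A s ≤ a) (hbB : ∀ s, 0 ≤ s → b ≤ B s) (hab : a < b) (hh : 0 < h)
    {s M : ℝ} (hs : 0 ≤ s) (hM : ∀ t, s ≤ t → |w t| ≤ M) :
    ∀ t, s + h ≤ t → |w t| ≤ (a / b + exp (-b * (t - (s + h)))) * M := by
  have ha : 0 ≤ a := (hA0 0 le_rfl).trans (hAa 0 le_rfl)
  have hb : 0 < b := ha.trans_lt hab
  have hM0 : 0 ≤ M := (abs_nonneg _).trans (hM s le_rfl)
  intro t ht
  refine le_of_forall_pos_le_add fun ε hε => ?_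
  have he : ∀ x, HasDerivAt (fun x => exp (-b * (x - (s + h))))
      (exp (-b * (x - (s + h))) * -b) x := fun x => by
    simpa using (((hasDerivAt_id x).sub_const (s + h)).const_mul (-b)).exp
  have hφ : ∀ x, HasDerivAt (fun x => a / b * M + M * exp (-b * (x - (s + h))) + ε)
      (M * (exp (-b * (x - (s + h))) * -b)) x :=
    fun x => (((he x).const_mul M).const_add _).add_const ε
  have hbab : b * (a / b * M) = a * M := by field_simp
  have hstart : |w (s + h)| ≤ a / b * M + M * exp (-b * (s + h - (s + h))) + ε := by
    rw [sub_self, mul_zero, Real.exp_zero, mul_one]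
    have := hM (s + h) (by linarith)
    nlinarith [div_nonneg ha hb.le]
  have hbarrier := hw.abs_le_of_barrier hA0 hAa hbB (τ := t) (by linarith)
    (fun x hx => hM _ (by linarith [hx.1])) hφ (fun _ _ => by positivity)
    (fun x _ => by nlinarith [mul_pos hb hε]) hstart t ⟨ht, le_rfl⟩
  linarith

end SolvesDelayEq

theorem exists_nonneg_exp_neg_mul_lt {b c : ℝ} (hb : 0 < b) (hc : 0 < c) :
    ∃ T, 0 ≤ T ∧ exp (-b * T) < c :=
  ((eventually_ge_atTop 0).and ((tendsto_exp_atBot.comp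
    (tendsto_id.const_mul_atTop_of_neg (neg_lt_zero.mpr hb))).eventually (gt_mem_nhds hc))).exists

theorem tendsto_zero_of_tail_bound_contracts {u : ℝ → ℝ} {q L M₀ : ℝ} (hq₀ : 0 ≤ q)
    (hq₁ : q < 1) (hL : 0 ≤ L) (hM₀ : ∀ t, 0 ≤ t → |u t| ≤ M₀)
    (hstep : ∀ s M, 0 ≤ s → (∀ t, s ≤ t → |u t| ≤ M) → ∀ t, s + L ≤ t → |u t| ≤ q * M) :
    Tendsto u atTop (𝓝 0) := by
  have hgeom : ∀ n : ℕ, ∀ t, n * L ≤ t → |u t| ≤ q ^ n * M₀ := by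
    intro n
    induction n with
    | zero => simpa using hM₀
    | succ n ih =>
      intro t ht
      rw [pow_succ', mul_assoc]
      exact hstep _ _ (by positivity) ih t (by push_cast at ht; linarith)
  have hlim : Tendsto (fun n : ℕ => q ^ n * M₀) atTop (𝓝 0) := by
    simpa using (tendsto_pow_atTop_nhds_zero_of_lt_one hq₀ hq₁).mul_const M₀
  refine Metric.tendsto_atTop.mpr fun ε hε => ?_
  obtain ⟨n, hn⟩ := (hlim.eventually_lt_const hε).exists
  exact ⟨n * L, fun t ht => by simpa [Real.dist_eq] using (hgeom n t ht).trans_lt hn⟩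

theorem linear_delay_stability_general (h : ℝ) (hh : 0 < h)
    (A B : ℝ → ℝ)
    (hAnn : ∀ s : ℝ, 0 ≤ s → 0 ≤ A s)
    (hgap : ∃ a b : ℝ, a < b ∧ (∀ s : ℝ, 0 ≤ s → A s ≤ a) ∧ (∀ s : ℝ, 0 ≤ s → b ≤ B s))
    (w : ℝ → ℝ) (hwc : ContinuousOn w (Set.Ici (-h)))
    (hw : ∀ s : ℝ, 0 < s → HasDerivAt w (A s * w (s - h) - B s * w s) s) :
    Tendsto w atTop (nhds 0) := by
  obtain ⟨a, b, hab, hAa, hbB⟩ := hgap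
  have hsol : SolvesDelayEq h A B w := hw
  have ha : 0 ≤ a := (hAnn 0 le_rfl).trans (hAa 0 le_rfl)
  have hb : 0 < b := ha.trans_lt hab
  obtain ⟨M₀, hM₀⟩ := isCompact_Icc.exists_bound_of_continuousOn
    (hwc.mono (Icc_subset_Ici_self : Icc (-h) h ⊆ _))
  have hbound : ∀ t, 0 ≤ t → |w t| ≤ M₀ := by
    simpa using hsol.abs_le_of_abs_le_on_Icc hAnn hAa hbB hab hh hh
      (fun s hs => (Real.norm_eq_abs _).symm.trans_le (hM₀ s ⟨by linarith [hs.1], hs.2⟩))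
  obtain ⟨T, hT0, hT⟩ := exists_nonneg_exp_neg_mul_lt hb (sub_pos.mpr ((div_lt_one hb).mpr hab))
  refine tendsto_zero_of_tail_bound_contracts (q := a / b + exp (-b * T)) (L := h + T)
    (by positivity) (by linarith) (by positivity) hbound fun s M hs hM t ht => ?_
  calc |w t| ≤ (a / b + exp (-b * (t - (s + h)))) * M :=
        hsol.abs_le_exp_decay hAnn hAa hbB hab hh hs hM t (by linarith)
    _ ≤ (a / b + exp (-b * T)) * M := by
        have hM0 : 0 ≤ M := (abs_nonneg _).trans (hM s le_rfl)
        have hexp : exp (-b * (t - (s + h))) ≤ exp (-b * T) :=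
          exp_le_exp.mpr (by nlinarith)
        gcongr

/-- **Stability criterion for the linear delay equation (27).** If `A(t) ≥ 0`,
`sup_{t ≥ 0} A(t) < inf_{t ≥ 0} B(t)` (witnessed by `a < b`) and `B` is bounded above,
then every continuous solution of `w' = A(t) w(·-h) - B(t) w` with bounded continuous
initial function on `[-h, 0]` tends to `0` at `+∞`. -/
theorem linear_delay_stability (h : ℝ) (hh : 0 < h)
    (A B : ℝ → ℝ) (hApc : PiecewiseContinuousFn A) (hBpc : PiecewiseContinuousFn B)
    (hAnn : ∀ s : ℝ, 0 ≤ s → 0 ≤ A s)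
    (hgap : ∃ a b : ℝ, a < b ∧ (∀ s : ℝ, 0 ≤ s → A s ≤ a) ∧ (∀ s : ℝ, 0 ≤ s → b ≤ B s))
    (hBbd : ∃ Bu : ℝ, ∀ s : ℝ, 0 ≤ s → B s ≤ Bu)
    (w : ℝ → ℝ) (hwc : ContinuousOn w (Set.Ici (-h)))
    (hw : ∀ s : ℝ, 0 < s → HasDerivAt w (A s * w (s - h) - B s * w s) s) :
    Tendsto w atTop (nhds 0) :=
  linear_delay_stability_general h hh A B hAnn hgap w hwc hw
end

section
/- Let h > 0 and let α, γ, x_m : ℝ → ℝ be bounded piecewise continuous W-almost periodic functions with common discontinuity sequence {t_k} having uniformly almost periodic differences, with α and γ positive. Then the function x_i(t) = ∫_{t−h}^{t} α(s) x_m(s) e^{−∫_s^{t} γ(ξ)dξ} ds is continuous on ℝ and almost periodic in the sense of Bohr: for every ε > 0 there is a relatively dense set Γ ⊆ ℝ such that |x_i(t+τ) − x_i(t)| < ε for all τ ∈ Γ and all t ∈ ℝ. -/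
open Filter Set Topology

/-- A set of reals is relatively dense if every interval of some fixed length `L` meets it. -/
def RelDenseR (Γ : Set ℝ) : Prop :=
  ∃ L : ℝ, 0 < L ∧ ∀ a : ℝ, ∃ τ ∈ Γ, a ≤ τ ∧ τ ≤ a + L

/-- `φ` is W-almost periodic with discontinuity sequence `t`. -/
def WAP (t : ℤ → ℝ) (φ : ℝ → ℝ) : Prop :=
  UAPD t ∧ PCWith t φ ∧
  (∀ ε > (0 : ℝ), ∃ δ > (0 : ℝ), ∀ k : ℤ, ∀ t' ∈ Set.Ioc (t k) (t (k + 1)),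
    ∀ t'' ∈ Set.Ioc (t k) (t (k + 1)), |t' - t''| < δ → |φ t' - φ t''| < ε) ∧
  (∀ ε > (0 : ℝ), ∃ Γ : Set ℝ, RelDenseR Γ ∧
    ∀ τ ∈ Γ, ∀ s : ℝ, (∀ k : ℤ, ε ≤ |s - t k|) → |φ (s + τ) - φ s| < ε)

/-!
The kernel `e^{-∫_u^s γ}` lies in `(0, 1]` and is `1`-Lipschitz in the exponent, so
`|x_i(s + τ) - x_i(s)|` is controlled by the `L¹` distances on `[s - h, s]` between `α`, `γ`,
`x_m` and their translates by `τ`. It therefore suffices that the three functions have a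
relatively dense set of common almost periods in the Stepanov sense (uniformly small `L¹`
distance on all windows of length `h`).

For one W-almost periodic function, its almost periods from (iii) are Stepanov almost periods,
because they fail only near the discontinuities and, the differences being uniformly almost
periodic, a window of length `h` meets boundedly many of them. Likewise, by (ii), small
translations are Stepanov-small. Together these make the family of translates totally bounded
in the Stepanov metric. Finitely many totally bounded families are jointly totally bounded, and
Bochner's argument turns a finite joint net into relatively dense common almost periods.
-/

open MeasureTheory intervalIntegral

lemma exists_mem_Ioc_of_monotone {t : ℤ → ℝ} (hmono : Monotone t)
    (htop : Tendsto t atTop atTop) (hbot : Tendsto t atBot atBot) (x : ℝ) :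
    ∃ k, x ∈ Ioc (t k) (t (k + 1)) := by
  have hne : ∃ k, t k < x := (hbot.eventually (eventually_lt_atBot x)).exists
  have hbdd : ∃ b, ∀ k, t k < x → k ≤ b := by
    obtain ⟨b, hb⟩ := (htop.eventually_ge_atTop x).exists
    exact ⟨b, fun k hk => le_of_not_gt fun hbk => (hb.trans (hmono hbk.le)).not_gt hk⟩
  obtain ⟨k, hk, hgreatest⟩ := Int.exists_greatest_of_bdd hbdd hne
  exact ⟨k, hk, le_of_not_gt fun hlt => by linarith [hgreatest (k + 1) hlt]⟩

lemma measurable_of_continuousOn_Ioc {t : ℤ → ℝ} (hmono : Monotone t)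
    (htop : Tendsto t atTop atTop) (hbot : Tendsto t atBot atBot) {φ : ℝ → ℝ}
    (hφ : ∀ k, ContinuousOn φ (Ioc (t k) (t (k + 1)))) : Measurable φ := by
  refine ContinuousOn.measurable_of_countable_compl (s := (range t)ᶜ) (fun x hx => ?_)
    (by simpa using countable_range t)
  obtain ⟨k, hk⟩ := exists_mem_Ioc_of_monotone hmono htop hbot x
  have hlt : x < t (k + 1) := hk.2.lt_of_ne fun h => hx ⟨k + 1, h.symm⟩
  exact ((hφ k).continuousAt (Ioc_mem_nhds hk.1 hlt)).continuousWithinAt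

lemma WAP.measurable {t : ℤ → ℝ} {φ : ℝ → ℝ} (hW : WAP t φ) : Measurable φ :=
  measurable_of_continuousOn_Ioc hW.1.1.monotone hW.1.2.1 hW.1.2.2.1 hW.2.1.1

/-- Every `m` is `k + p` with `k ∈ [1, N]` and `p` an almost period of the differences, so the
`j`-step gaps starting anywhere are within `1` of those starting in `[1, N]`. -/
lemma UAPD.exists_gap {t : ℤ → ℝ} (hU : UAPD t) (c : ℝ) :
    ∃ j : ℕ, ∀ m : ℤ, c < t (m + j) - t m := by
  obtain ⟨hmono, htop, -, hap⟩ := hU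
  obtain ⟨P, ⟨N, -, hPdense⟩, hP⟩ := hap 1 one_pos
  obtain ⟨j, hj⟩ := eventually_atTop.1 (htop.eventually_ge_atTop (t N + c + 2))
  refine ⟨j.toNat, fun m => ?_⟩
  obtain ⟨p, hpP, hp1, hp2⟩ := hPdense (m - N)
  have hclose := abs_lt.1 (hP p hpP j.toNat (m - p))
  have hfar : t N + c + 2 ≤ t (m - p + j.toNat) :=
    (hj (1 + j.toNat) (by omega)).trans (hmono.monotone (by omega))
  have hN : t (m - p) ≤ t N := hmono.monotone (by omega)
  rw [sub_add_cancel] at hclose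
  linarith [hclose.1]

lemma volume_iUnion_Icc_inter_Icc_le {t : ℤ → ℝ} (hmono : Monotone t)
    (htop : Tendsto t atTop atTop) (hbot : Tendsto t atBot atBot) {w : ℝ} {j : ℕ}
    (hgap : ∀ m, w + 2 < t (m + j) - t m) {η : ℝ} (hη1 : η ≤ 1) (x : ℝ) :
    volume ((⋃ k, Icc (t k - η) (t k + η)) ∩ Icc x (x + w)) ≤ ENNReal.ofReal (2 * η * j) := by
  have hne : ∃ k, x - 1 ≤ t k := (htop.eventually_ge_atTop (x - 1)).exists
  have hbdd : ∃ b, ∀ k, x - 1 ≤ t k → b ≤ k := by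
    obtain ⟨b, hb⟩ := (hbot.eventually (eventually_lt_atBot (x - 1))).exists
    exact ⟨b, fun k hk => le_of_not_gt fun hkb => (hmono hkb.le).not_gt (hb.trans_le hk)⟩
  obtain ⟨k₀, hk₀, hleast⟩ := Int.exists_least_of_bdd hbdd hne
  -- Only the `t k` in `[x - 1, x + w + 1]` matter, and by the gap condition they are among the
  -- `j` points from `t k₀` on.
  have hsub : (⋃ k, Icc (t k - η) (t k + η)) ∩ Icc x (x + w) ⊆
      ⋃ i ∈ Finset.range j, Icc (t (k₀ + i) - η) (t (k₀ + i) + η) := by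
    rintro u ⟨hu, hux, huw⟩
    obtain ⟨m, hm1, hm2⟩ := mem_iUnion.1 hu
    have hk₀m : k₀ ≤ m := hleast m (by linarith)
    have hmj : m < k₀ + j := lt_of_not_ge fun hc => by
      linarith [hmono hc, hgap k₀]
    simp only [Finset.mem_range, mem_iUnion, exists_prop]
    refine ⟨(m - k₀).toNat, by omega, ?_⟩
    rw [show k₀ + ((m - k₀).toNat : ℤ) = m by omega]
    exact ⟨hm1, hm2⟩
  calc volume ((⋃ k, Icc (t k - η) (t k + η)) ∩ Icc x (x + w))
      ≤ ∑ i ∈ Finset.range j, volume (Icc (t (k₀ + i) - η) (t (k₀ + i) + η)) :=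
        (measure_mono hsub).trans (measure_biUnion_finset_le _ _)
    _ = ENNReal.ofReal (2 * η * j) := by
        simp only [Real.volume_Icc, show ∀ a, a + η - (a - η) = 2 * η from fun a => by ring,
          Finset.sum_const, Finset.card_range, nsmul_eq_mul]
        rw [← ENNReal.ofReal_natCast j, ← ENNReal.ofReal_mul (by positivity)]
        ring_nf

lemma intervalIntegrable_of_abs_le {f : ℝ → ℝ} (hf : Measurable f) {M : ℝ}
    (hM : ∀ u, |f u| ≤ M) (a b : ℝ) : IntervalIntegrable f volume a b :=
  (intervalIntegrable_const (c := M)).mono_fun' hf.aestronglyMeasurable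
    (Eventually.of_forall hM)

lemma intervalIntegral_abs_le_of_abs_le_off {g : ℝ → ℝ} (hg : Measurable g) {B : Set ℝ}
    (hB : MeasurableSet B) {x w c C V : ℝ} (hw : 0 ≤ w) (hc : 0 ≤ c) (hC : ∀ u, |g u| ≤ C)
    (hoff : ∀ u ∉ B, |g u| ≤ c) (hV0 : 0 ≤ V)
    (hV : volume (B ∩ Icc x (x + w)) ≤ ENNReal.ofReal V) :
    ∫ u in x..x + w, |g u| ≤ c * w + C * V := by
  have hC0 : 0 ≤ C := (abs_nonneg _).trans (hC 0)
  have hpt : ∀ u, |g u| ≤ c + C * B.indicator 1 u := fun u => by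
    by_cases hu : u ∈ B
    · simpa [hu] using (hC u).trans (le_add_of_nonneg_left hc)
    · simpa [hu] using hoff u hu
  have hind_le : ∀ u, |B.indicator (1 : ℝ → ℝ) u| ≤ 1 := fun u => by
    by_cases hu : u ∈ B <;> simp [hu]
  have hind : IntervalIntegrable (B.indicator (1 : ℝ → ℝ)) volume x (x + w) :=
    intervalIntegrable_of_abs_le (measurable_const.indicator hB) hind_le _ _
  have hvol : ∫ u in x..x + w, B.indicator (1 : ℝ → ℝ) u ≤ V := by
    rw [integral_of_le (by linarith), integral_indicator_one hB, measureReal_restrict_apply hB]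
    refine ENNReal.toReal_le_of_le_ofReal hV0 ((measure_mono ?_).trans hV)
    exact inter_subset_inter_right _ Ioc_subset_Icc_self
  calc ∫ u in x..x + w, |g u|
      ≤ ∫ u in x..x + w, (c + C * B.indicator 1 u) :=
        integral_mono_on (by linarith) (intervalIntegrable_of_abs_le hg.abs
          (fun u => (abs_abs (g u)).trans_le (hC u)) _ _)
          (intervalIntegrable_const.add (hind.const_mul C)) fun u _ => hpt u
    _ = c * w + C * ∫ u in x..x + w, B.indicator (1 : ℝ → ℝ) u := by
        rw [integral_add intervalIntegrable_const (hind.const_mul C),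
          intervalIntegral.integral_const_mul, intervalIntegral.integral_const, smul_eq_mul]
        ring
    _ ≤ c * w + C * V := by gcongr

lemma exists_pos_le_mul_le {K δ : ℝ} (hK : 0 ≤ K) (hδ : 0 < δ) {b : ℝ} (hb : 0 < b) :
    ∃ ε, 0 < ε ∧ ε ≤ b ∧ ε * K ≤ δ := by
  refine ⟨min b (δ / (K + 1)), lt_min hb (by positivity), min_le_left _ _, ?_⟩
  calc min b (δ / (K + 1)) * K ≤ δ / (K + 1) * (K + 1) := by
        gcongr <;> linarith [min_le_right b (δ / (K + 1))]
    _ = δ := div_mul_cancel₀ _ (by positivity)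

lemma abs_sub_le_two_mul {φ : ℝ → ℝ} {M : ℝ} (hM : ∀ u, |φ u| ≤ M) (a b : ℝ) :
    |φ a - φ b| ≤ 2 * M :=
  (abs_sub _ _).trans (by linarith [hM a, hM b])

def StepanovClose (h : ℝ) (φ : ℝ → ℝ) (δ σ τ : ℝ) : Prop :=
  ∀ x, ∫ u in x..x + h, |φ (u + σ) - φ (u + τ)| ≤ δ

namespace StepanovClose

variable {h δ σ τ : ℝ} {φ : ℝ → ℝ}

lemma mono {δ' : ℝ} (H : StepanovClose h φ δ σ τ) (hδ : δ ≤ δ') : StepanovClose h φ δ' σ τ :=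
  fun x => (H x).trans hδ

lemma symm (H : StepanovClose h φ δ σ τ) : StepanovClose h φ δ τ σ :=
  fun x => by simpa only [abs_sub_comm] using H x

lemma trans {δ' ρ M : ℝ} (hh : 0 ≤ h) (hφ : Measurable φ) (hM : ∀ u, |φ u| ≤ M)
    (H : StepanovClose h φ δ σ τ) (H' : StepanovClose h φ δ' τ ρ) :
    StepanovClose h φ (δ + δ') σ ρ := by
  intro x
  have hint : ∀ a b, IntervalIntegrable (fun u => |φ (u + a) - φ (u + b)|) volume x (x + h) :=
    fun a b => intervalIntegrable_of_abs_le (by fun_prop)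
      (fun u => (abs_abs _).trans_le (abs_sub_le_two_mul hM _ _)) _ _
  calc ∫ u in x..x + h, |φ (u + σ) - φ (u + ρ)|
      ≤ ∫ u in x..x + h, (|φ (u + σ) - φ (u + τ)| + |φ (u + τ) - φ (u + ρ)|) :=
        integral_mono_on (by linarith) (hint σ ρ) ((hint σ τ).add (hint τ ρ))
          fun u _ => abs_sub_le _ _ _
    _ ≤ δ + δ' := by rw [integral_add (hint σ τ) (hint τ ρ)]; exact add_le_add (H x) (H' x)

end StepanovClose

lemma stepanovClose_iff_sub {h δ σ τ : ℝ} {φ : ℝ → ℝ} :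
    StepanovClose h φ δ σ τ ↔ StepanovClose h φ δ (σ - τ) 0 := by
  have key : ∀ x, ∫ u in x..x + h, |φ (u + σ) - φ (u + τ)| =
      ∫ u in (x + τ)..(x + τ) + h, |φ (u + (σ - τ)) - φ (u + 0)| := fun x => by
    rw [add_right_comm x τ h, ← integral_comp_add_right]
    simp only [add_zero, add_add_sub_cancel]
  refine ⟨fun H y => ?_, fun H x => (key x).trans_le (H (x + τ))⟩
  simpa only [key, sub_add_cancel] using H (y - τ)

namespace WAP

variable {t : ℤ → ℝ} {φ : ℝ → ℝ} {M h : ℝ}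

/-- The bound is `c` on the window plus `2M` on the `η`-neighbourhood of the discontinuities,
which meets a window of length `h` in measure at most `2ηj`. -/
lemma stepanovClose_of_abs_le_off (hW : WAP t φ) (hM : ∀ u, |φ u| ≤ M) (hh : 0 ≤ h) {j : ℕ}
    (hgap : ∀ m, h + 2 < t (m + j) - t m) {η c σ : ℝ} (hη0 : 0 ≤ η) (hη1 : η ≤ 1)
    (hc : 0 ≤ c) (hoff : ∀ u, (∀ k, η < |u - t k|) → |φ (u + σ) - φ u| ≤ c) :
    StepanovClose h φ (c * h + 2 * M * (2 * η * j)) σ 0 := by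
  have hφ := hW.measurable
  obtain ⟨⟨hmono, htop, hbot, -⟩, -⟩ := hW
  intro x
  refine intervalIntegral_abs_le_of_abs_le_off (by fun_prop)
    (MeasurableSet.iUnion fun k => measurableSet_Icc) hh hc
    (fun u => abs_sub_le_two_mul hM _ _) (fun u hu => ?_) (by positivity)
    (volume_iUnion_Icc_inter_Icc_le hmono.monotone htop hbot hgap hη1 x)
  rw [add_zero]
  refine hoff u fun k => lt_of_not_ge fun hk => hu (mem_iUnion.2 ⟨k, ?_⟩)
  constructor <;> linarith [abs_le.1 hk]

lemma relDenseR_stepanovClose (hW : WAP t φ) (hM : ∀ u, |φ u| ≤ M) (hh : 0 ≤ h) {δ : ℝ}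
    (hδ : 0 < δ) : RelDenseR {τ | StepanovClose h φ δ τ 0} := by
  have hM0 : 0 ≤ M := (abs_nonneg _).trans (hM 0)
  obtain ⟨j, hgap⟩ := hW.1.exists_gap (h + 2)
  obtain ⟨ε, hε0, hε1, hεδ⟩ := exists_pos_le_mul_le (K := h + 4 * M * j) (by positivity) hδ one_pos
  obtain ⟨Γ, ⟨L, hL, hΓdense⟩, hΓ⟩ := hW.2.2.2 ε hε0
  refine ⟨L, hL, fun a => ?_⟩
  obtain ⟨τ, hτ, haτ⟩ := hΓdense a
  refine ⟨τ, ?_, haτ⟩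
  refine (hW.stepanovClose_of_abs_le_off hM hh hgap hε0.le hε1 hε0.le
    fun u hu => (hΓ τ hτ u fun k => (hu k).le).le).mono ?_
  linarith

lemma exists_pos_stepanovClose (hW : WAP t φ) (hM : ∀ u, |φ u| ≤ M) (hh : 0 ≤ h) {δ : ℝ}
    (hδ : 0 < δ) : ∃ ρ > 0, ∀ σ, |σ| ≤ ρ → StepanovClose h φ δ σ 0 := by
  have hM0 : 0 ≤ M := (abs_nonneg _).trans (hM 0)
  obtain ⟨j, hgap⟩ := hW.1.exists_gap (h + 2)
  obtain ⟨hmono, htop, hbot, -⟩ := hW.1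
  obtain ⟨c, hc0, -, hch⟩ := exists_pos_le_mul_le hh (half_pos hδ) one_pos
  obtain ⟨δ₁, hδ₁, hδ₁c⟩ := hW.2.2.1 c hc0
  obtain ⟨ρ, hρ0, hρb, hρM⟩ := exists_pos_le_mul_le (K := 4 * M * j) (by positivity)
    (half_pos hδ) (lt_min one_pos (half_pos hδ₁))
  refine ⟨ρ, hρ0, fun σ hσ => ?_⟩
  refine (hW.stepanovClose_of_abs_le_off hM hh hgap hρ0.le (hρb.trans (min_le_left _ _)) hc0.le
    fun u hu => ?_).mono (by linarith)
  obtain ⟨k, hk⟩ := exists_mem_Ioc_of_monotone hmono.monotone htop hbot u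
  have hleft := hu k
  have hright := hu (k + 1)
  rw [abs_of_pos (sub_pos.2 hk.1)] at hleft
  rw [abs_of_nonpos (sub_nonpos.2 hk.2)] at hright
  have hσ' := abs_le.1 hσ
  have hsame : u + σ ∈ Ioc (t k) (t (k + 1)) := ⟨by linarith, by linarith⟩
  have hρδ₁ : ρ < δ₁ := (hρb.trans (min_le_right _ _)).trans_lt (half_lt_self hδ₁)
  exact (hδ₁c k _ hsame u hk (by simpa using hσ.trans_lt hρδ₁)).le

lemma exists_finite_stepanovClose (hW : WAP t φ) (hM : ∀ u, |φ u| ≤ M) (hh : 0 ≤ h) {δ : ℝ}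
    (hδ : 0 < δ) : ∃ T : Set ℝ, T.Finite ∧ ∀ s, ∃ c ∈ T, StepanovClose h φ δ s c := by
  obtain ⟨L, hL, hΓ⟩ := hW.relDenseR_stepanovClose hM hh (half_pos hδ)
  obtain ⟨ρ, hρ, hρσ⟩ := hW.exists_pos_stepanovClose hM hh (half_pos hδ)
  refine ⟨(fun i : ℕ => i * ρ) '' Iio (⌊L / ρ⌋₊ + 1), (finite_Iio _).image _, fun s => ?_⟩
  obtain ⟨τ, hτ, hτ1, hτ2⟩ := hΓ (s - L)
  set σ := s - τ
  have hσ0 : 0 ≤ σ / ρ := div_nonneg (by linarith) hρ.le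
  have hlow : ⌊σ / ρ⌋₊ * ρ ≤ σ := (le_div_iff₀ hρ).1 (Nat.floor_le hσ0)
  have hup : σ < (⌊σ / ρ⌋₊ + 1) * ρ := (div_lt_iff₀ hρ).1 (Nat.lt_floor_add_one _)
  refine ⟨⌊σ / ρ⌋₊ * ρ, mem_image_of_mem _ (Nat.lt_succ_of_le (Nat.floor_le_floor ?_)), ?_⟩
  · exact div_le_div_of_nonneg_right (by linarith) hρ.le
  have hsσ : StepanovClose h φ (δ / 2) s σ := by
    rw [stepanovClose_iff_sub, sub_sub_cancel]
    exact hτ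
  have hσgrid : StepanovClose h φ (δ / 2) σ (⌊σ / ρ⌋₊ * ρ) :=
    stepanovClose_iff_sub.2 (hρσ _ (abs_le.2 ⟨by linarith, by linarith⟩))
  exact (hsσ.trans hh hW.measurable hM hσgrid).mono (by linarith)

end WAP

lemma exists_finite_forall_stepanovClose {ι : Type*} [Finite ι] {φ : ι → ℝ → ℝ} {h M : ℝ}
    (hh : 0 ≤ h) (hφ : ∀ i, Measurable (φ i)) (hM : ∀ i u, |φ i u| ≤ M)
    (hnet : ∀ i, ∀ δ > 0, ∃ T : Set ℝ, T.Finite ∧ ∀ s, ∃ c ∈ T, StepanovClose h (φ i) δ s c)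
    {δ : ℝ} (hδ : 0 < δ) :
    ∃ T : Set ℝ, T.Finite ∧ ∀ s, ∃ c ∈ T, ∀ i, StepanovClose h (φ i) δ s c := by
  choose T hTfin hT using fun i => hnet i (δ / 2) (half_pos hδ)
  choose κ hκT hκ using fun s i => hT i s
  -- `κ s` lists, for each `i`, a net point near `s`; it takes finitely many values, and one
  -- representative of each value is a joint net.
  have hκfin : (range κ).Finite :=
    (Finite.pi hTfin).subset (range_subset_iff.2 fun s => mem_univ_pi.2 (hκT s))
  have := hκfin.to_subtype
  refine ⟨range (rangeSplitting κ), finite_range _, fun s => ?_⟩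
  set c := rangeSplitting κ ⟨κ s, mem_range_self s⟩
  have hκc : κ c = κ s := apply_rangeSplitting κ _
  refine ⟨c, mem_range_self _, fun i => ?_⟩
  have hc := hκ c i
  rw [hκc] at hc
  exact ((hκ s i).trans hh (hφ i) (hM i) hc.symm).mono (add_halves δ).le

lemma relDenseR_of_finite_net {P : ℝ → ℝ → Prop} (hP : ∀ σ τ, P σ τ → P (σ - τ) 0)
    {T : Set ℝ} (hT : T.Finite) (hnet : ∀ s, ∃ c ∈ T, P s c) : RelDenseR {τ | P τ 0} := by
  obtain ⟨A, hA⟩ := hT.bddAbove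
  obtain ⟨B, hB⟩ := hT.bddBelow
  obtain ⟨c₀, hc₀, -⟩ := hnet 0
  refine ⟨A - B + 1, by linarith [hA hc₀, hB hc₀], fun a => ?_⟩
  obtain ⟨c, hc, hPc⟩ := hnet (a + A)
  exact ⟨a + A - c, hP _ _ hPc, by linarith [hA hc], by linarith [hB hc]⟩

lemma relDenseR_forall_stepanovClose {ι : Type*} [Finite ι] {t : ι → ℤ → ℝ}
    {φ : ι → ℝ → ℝ} (hW : ∀ i, WAP (t i) (φ i)) {M h : ℝ} (hM : ∀ i u, |φ i u| ≤ M)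
    (hh : 0 ≤ h) {δ : ℝ} (hδ : 0 < δ) :
    RelDenseR {τ | ∀ i, StepanovClose h (φ i) δ τ 0} :=
  let ⟨_, hT, hnet⟩ := exists_finite_forall_stepanovClose hh (fun i => (hW i).measurable) hM
    (fun i _ hδ => (hW i).exists_finite_stepanovClose (hM i) hh hδ) hδ
  relDenseR_of_finite_net (fun _ _ H i => stepanovClose_iff_sub.1 (H i)) hT hnet

lemma abs_exp_neg_sub_exp_neg_le {a b : ℝ} (ha : 0 ≤ a) (hb : 0 ≤ b) :
    |Real.exp (-a) - Real.exp (-b)| ≤ |a - b| := by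
  wlog hab : a ≤ b generalizing a b
  · rw [abs_sub_comm, abs_sub_comm a]
    exact this hb ha (le_of_not_ge hab)
  have hexp : Real.exp (-b) = Real.exp (-a) * Real.exp (a - b) := by
    rw [← Real.exp_add]; ring_nf
  rw [abs_of_nonneg (sub_nonneg.2 (Real.exp_le_exp.2 (neg_le_neg hab))),
    abs_of_nonpos (sub_nonpos.2 hab), hexp]
  nlinarith [Real.add_one_le_exp (a - b), Real.exp_pos (-a),
    Real.exp_le_one_iff.2 (neg_nonpos.2 ha)]

lemma abs_mul_mul_sub_mul_mul_le {a₁ a₂ x₁ x₂ e₁ e₂ M : ℝ} (ha₁ : |a₁| ≤ M) (ha₂ : |a₂| ≤ M)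
    (hx₂ : |x₂| ≤ M) (he₁ : |e₁| ≤ 1) :
    |a₁ * x₁ * e₁ - a₂ * x₂ * e₂| ≤ M * |x₁ - x₂| + M * |a₁ - a₂| + M ^ 2 * |e₁ - e₂| := by
  have hM : 0 ≤ M := (abs_nonneg _).trans ha₁
  calc |a₁ * x₁ * e₁ - a₂ * x₂ * e₂|
      = |(a₁ * (x₁ - x₂) + x₂ * (a₁ - a₂)) * e₁ + a₂ * x₂ * (e₁ - e₂)| := by ring_nf
    _ ≤ (|a₁| * |x₁ - x₂| + |x₂| * |a₁ - a₂|) * |e₁| + |a₂| * |x₂| * |e₁ - e₂| := by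
        refine (abs_add_le _ _).trans ?_
        rw [abs_mul, abs_mul, abs_mul]
        gcongr
        exact (abs_add_le _ _).trans_eq (by rw [abs_mul, abs_mul])
    _ ≤ (M * |x₁ - x₂| + M * |a₁ - a₂|) * 1 + M * M * |e₁ - e₂| := by gcongr
    _ = M * |x₁ - x₂| + M * |a₁ - a₂| + M ^ 2 * |e₁ - e₂| := by ring

lemma continuous_integral_left {γ : ℝ → ℝ} (hγ : ∀ a b, IntervalIntegrable γ volume a b)
    (b : ℝ) : Continuous fun a => ∫ r in a..b, γ r := by
  exact (continuous_primitive hγ b).neg.congr fun a => (integral_symm b a).symm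

noncomputable def delayIntegral (h : ℝ) (α γ x : ℝ → ℝ) (s : ℝ) : ℝ :=
  ∫ u in (s - h)..s, α u * x u * Real.exp (-∫ r in u..s, γ r)

lemma delayIntegral_add (h : ℝ) (α γ x : ℝ → ℝ) (s τ : ℝ) :
    delayIntegral h α γ x (s + τ) =
      delayIntegral h (fun u => α (u + τ)) (fun u => γ (u + τ)) (fun u => x (u + τ)) s := by
  simp only [delayIntegral, integral_comp_add_right (fun r => γ r)]
  rw [show s + τ - h = s - h + τ by ring,
    ← integral_comp_add_right (fun u => α u * x u * Real.exp (-∫ r in u..s + τ, γ r))]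

lemma intervalIntegrable_delayIntegrand {α γ x : ℝ → ℝ} {M : ℝ} (hα : Measurable α)
    (hx : Measurable x) (hMα : ∀ u, |α u| ≤ M) (hMx : ∀ u, |x u| ≤ M)
    (hγ : ∀ a b, IntervalIntegrable γ volume a b) (a b s : ℝ) :
    IntervalIntegrable (fun u => α u * x u * Real.exp (-∫ r in u..s, γ r)) volume a b := by
  have hαx : ∀ u, |α u * x u| ≤ M * M := fun u => by
    rw [abs_mul]
    exact mul_le_mul (hMα u) (hMx u) (abs_nonneg _) ((abs_nonneg _).trans (hMα u))
  exact (intervalIntegrable_of_abs_le (by fun_prop) hαx a b).mul_continuousOn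
    (continuous_integral_left hγ s).neg.rexp.continuousOn

lemma continuous_delayIntegral {α γ x : ℝ → ℝ} {M : ℝ} (h : ℝ) (hα : Measurable α)
    (hx : Measurable x) (hMα : ∀ u, |α u| ≤ M) (hMx : ∀ u, |x u| ≤ M)
    (hγ : ∀ a b, IntervalIntegrable γ volume a b) : Continuous (delayIntegral h α γ x) := by
  set G := fun y => ∫ r in (0 : ℝ)..y, γ r
  have hα' : ∀ a b, IntervalIntegrable (fun u => α u * x u * Real.exp (-∫ r in u..0, γ r))
      volume a b := fun a b => intervalIntegrable_delayIntegrand hα hx hMα hMx hγ a b 0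
  set H := fun y => ∫ u in (0 : ℝ)..y, α u * x u * Real.exp (-∫ r in u..0, γ r)
  -- `e^{-∫_u^s γ} = e^{-∫_u^0 γ} e^{-G s}` separates the variables.
  have hsplit : delayIntegral h α γ x = fun s => (H s - H (s - h)) * Real.exp (-G s) := by
    funext s
    have hfac : ∀ u, α u * x u * Real.exp (-∫ r in u..s, γ r) =
        α u * x u * Real.exp (-∫ r in u..0, γ r) * Real.exp (-G s) := fun u => by
      rw [mul_assoc (α u * x u), ← Real.exp_add, ← neg_add,
        integral_add_adjacent_intervals (hγ u 0) (hγ 0 s)]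
    simp only [delayIntegral, hfac, intervalIntegral.integral_mul_const,
      integral_interval_sub_left (hα' 0 s) (hα' 0 (s - h)), H]
  rw [hsplit]
  have hH : Continuous H := continuous_primitive hα' 0
  exact ((hH.sub (hH.comp (continuous_sub_right h))).mul
    (continuous_primitive hγ 0).neg.rexp)

lemma abs_exp_neg_integral_sub_le {γ₁ γ₂ : ℝ → ℝ}
    (hγ₁ : ∀ a b, IntervalIntegrable γ₁ volume a b) (hγ₂ : ∀ a b, IntervalIntegrable γ₂ volume a b)
    (hγ₁0 : ∀ u, 0 ≤ γ₁ u) (hγ₂0 : ∀ u, 0 ≤ γ₂ u) {a v b : ℝ} (hav : a ≤ v) (hvb : v ≤ b) :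
    |Real.exp (-∫ r in v..b, γ₁ r) - Real.exp (-∫ r in v..b, γ₂ r)| ≤
      ∫ r in a..b, |γ₁ r - γ₂ r| := by
  refine (abs_exp_neg_sub_exp_neg_le (integral_nonneg hvb fun r _ => hγ₁0 r)
    (integral_nonneg hvb fun r _ => hγ₂0 r)).trans ?_
  rw [← integral_sub (hγ₁ v b) (hγ₂ v b)]
  exact (abs_integral_le_integral_abs hvb).trans (integral_mono_interval hav hvb le_rfl
    (Eventually.of_forall fun r => abs_nonneg _) ((hγ₁ a b).sub (hγ₂ a b)).abs)

lemma abs_delayIntegral_sub_le {α₁ γ₁ x₁ α₂ γ₂ x₂ : ℝ → ℝ} {M h : ℝ} (hh : 0 ≤ h)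
    (hα₁ : Measurable α₁) (hx₁ : Measurable x₁) (hα₂ : Measurable α₂) (hx₂ : Measurable x₂)
    (hMα₁ : ∀ u, |α₁ u| ≤ M) (hMx₁ : ∀ u, |x₁ u| ≤ M)
    (hMα₂ : ∀ u, |α₂ u| ≤ M) (hMx₂ : ∀ u, |x₂ u| ≤ M)
    (hγ₁ : ∀ a b, IntervalIntegrable γ₁ volume a b) (hγ₂ : ∀ a b, IntervalIntegrable γ₂ volume a b)
    (hγ₁0 : ∀ u, 0 ≤ γ₁ u) (hγ₂0 : ∀ u, 0 ≤ γ₂ u) (s : ℝ) :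
    |delayIntegral h α₁ γ₁ x₁ s - delayIntegral h α₂ γ₂ x₂ s| ≤
      M * (∫ u in (s - h)..s, |x₁ u - x₂ u|) + M * (∫ u in (s - h)..s, |α₁ u - α₂ u|) +
        M ^ 2 * h * ∫ u in (s - h)..s, |γ₁ u - γ₂ u| := by
  have hsh : s - h ≤ s := by linarith
  set D := ∫ u in (s - h)..s, |γ₁ u - γ₂ u|
  have hX : IntervalIntegrable (fun u => M * |x₁ u - x₂ u|) volume (s - h) s :=
    (((intervalIntegrable_of_abs_le hx₁ hMx₁ _ _).sub
      (intervalIntegrable_of_abs_le hx₂ hMx₂ _ _)).abs).const_mul M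
  have hA : IntervalIntegrable (fun u => M * |α₁ u - α₂ u|) volume (s - h) s :=
    (((intervalIntegrable_of_abs_le hα₁ hMα₁ _ _).sub
      (intervalIntegrable_of_abs_le hα₂ hMα₂ _ _)).abs).const_mul M
  have hJ₁ := intervalIntegrable_delayIntegrand hα₁ hx₁ hMα₁ hMx₁ hγ₁ (s - h) s s
  have hJ₂ := intervalIntegrable_delayIntegrand hα₂ hx₂ hMα₂ hMx₂ hγ₂ (s - h) s s
  have hpoint : ∀ u ∈ Icc (s - h) s, |α₁ u * x₁ u * Real.exp (-∫ r in u..s, γ₁ r) -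
      α₂ u * x₂ u * Real.exp (-∫ r in u..s, γ₂ r)| ≤
        M * |x₁ u - x₂ u| + M * |α₁ u - α₂ u| + M ^ 2 * D := by
    rintro u ⟨hu₁, hu₂⟩
    have hexp₁ : |Real.exp (-∫ r in u..s, γ₁ r)| ≤ 1 := by
      rw [abs_of_pos (Real.exp_pos _), Real.exp_le_one_iff, neg_nonpos]
      exact integral_nonneg hu₂ fun r _ => hγ₁0 r
    refine (abs_mul_mul_sub_mul_mul_le (hMα₁ u) (hMα₂ u) (hMx₂ u) hexp₁).trans ?_
    gcongr
    exact abs_exp_neg_integral_sub_le hγ₁ hγ₂ hγ₁0 hγ₂0 hu₁ hu₂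
  calc |delayIntegral h α₁ γ₁ x₁ s - delayIntegral h α₂ γ₂ x₂ s|
      = |∫ u in (s - h)..s, (α₁ u * x₁ u * Real.exp (-∫ r in u..s, γ₁ r) -
          α₂ u * x₂ u * Real.exp (-∫ r in u..s, γ₂ r))| := by
        rw [delayIntegral, delayIntegral, integral_sub hJ₁ hJ₂]
    _ ≤ ∫ u in (s - h)..s, |α₁ u * x₁ u * Real.exp (-∫ r in u..s, γ₁ r) -
          α₂ u * x₂ u * Real.exp (-∫ r in u..s, γ₂ r)| := abs_integral_le_integral_abs hsh
    _ ≤ ∫ u in (s - h)..s, (M * |x₁ u - x₂ u| + M * |α₁ u - α₂ u| + M ^ 2 * D) :=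
        integral_mono_on hsh (hJ₁.sub hJ₂).abs ((hX.add hA).add intervalIntegrable_const) hpoint
    _ = M * (∫ u in (s - h)..s, |x₁ u - x₂ u|) + M * (∫ u in (s - h)..s, |α₁ u - α₂ u|) +
        M ^ 2 * h * D := by
        rw [integral_add (hX.add hA) intervalIntegrable_const, integral_add hX hA,
          intervalIntegral.integral_const_mul, intervalIntegral.integral_const_mul,
          intervalIntegral.integral_const, smul_eq_mul, sub_sub_cancel]
        ring

lemma abs_delayIntegral_add_sub_le {α γ x : ℝ → ℝ} {M h : ℝ} (hh : 0 ≤ h) (hα : Measurable α)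
    (hx : Measurable x) (hMα : ∀ u, |α u| ≤ M) (hMx : ∀ u, |x u| ≤ M)
    (hγ : ∀ a b, IntervalIntegrable γ volume a b) (hγ0 : ∀ u, 0 ≤ γ u) (s τ : ℝ) :
    |delayIntegral h α γ x (s + τ) - delayIntegral h α γ x s| ≤
      M * (∫ u in (s - h)..s, |x (u + τ) - x u|) + M * (∫ u in (s - h)..s, |α (u + τ) - α u|) +
        M ^ 2 * h * ∫ u in (s - h)..s, |γ (u + τ) - γ u| := by
  rw [delayIntegral_add]
  exact abs_delayIntegral_sub_le hh (by fun_prop) (by fun_prop) hα hx (fun u => hMα _)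
    (fun u => hMx _) hMα hMx (fun a b => by simpa using (hγ (a + τ) (b + τ)).comp_add_right τ)
    hγ (fun u => hγ0 _) hγ0 s

theorem immature_bohr_almost_periodic_general (h : ℝ) (hh : 0 < h) (t : ℤ → ℝ)
    (α γ xm : ℝ → ℝ)
    (hα : WAP t α) (hγ : WAP t γ) (hxm : WAP t xm)
    (hγpos : ∀ s : ℝ, 0 < γ s)
    (hbd : ∃ M : ℝ, ∀ s : ℝ, |α s| ≤ M ∧ |γ s| ≤ M ∧ |xm s| ≤ M)
    (xi : ℝ → ℝ)
    (hxi : ∀ s : ℝ, xi s = ∫ u in (s - h)..s, α u * xm u * Real.exp (-∫ r in u..s, γ r)) :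
    Continuous xi ∧
      ∀ ε > (0 : ℝ), ∃ Γ : Set ℝ, RelDenseR Γ ∧
        ∀ τ ∈ Γ, ∀ s : ℝ, |xi (s + τ) - xi s| < ε := by
  obtain ⟨M, hM⟩ := hbd
  obtain rfl : xi = delayIntegral h α γ xm := funext hxi
  have hM0 : 0 ≤ M := (abs_nonneg _).trans (hM 0).1
  have hγint : ∀ a b, IntervalIntegrable γ volume a b :=
    intervalIntegrable_of_abs_le hγ.measurable fun u => (hM u).2.1
  refine ⟨continuous_delayIntegral h hα.measurable hxm.measurable (fun u => (hM u).1)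
    (fun u => (hM u).2.2) hγint, fun ε hε => ?_⟩
  obtain ⟨δ, hδ, -, hδε⟩ := exists_pos_le_mul_le (K := 2 * M + M ^ 2 * h) (by positivity)
    (half_pos hε) one_pos
  refine ⟨_, relDenseR_forall_stepanovClose (φ := ![α, γ, xm]) (t := fun _ => t)
    (fun i => by fin_cases i <;> assumption) (M := M)
    (fun i u => by fin_cases i <;> simp [hM u]) hh.le hδ, fun τ hτ s => ?_⟩
  have hwindow : ∀ i, ∫ u in (s - h)..s, |![α, γ, xm] i (u + τ) - ![α, γ, xm] i u| ≤ δ :=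
    fun i => by simpa using hτ i (s - h)
  calc |delayIntegral h α γ xm (s + τ) - delayIntegral h α γ xm s|
      ≤ M * δ + M * δ + M ^ 2 * h * δ := by
        refine (abs_delayIntegral_add_sub_le hh.le hα.measurable hxm.measurable
          (fun u => (hM u).1) (fun u => (hM u).2.2) hγint (fun u => (hγpos u).le) s τ).trans ?_
        gcongr
        exacts [hwindow 2, hwindow 0, hwindow 1]
    _ < ε := by nlinarith

/-- **Bohr almost periodicity of the immature population (20).** If `α, γ, x_m` are
bounded W-almost periodic piecewise continuous functions with common discontinuity
sequence `{t_k}` with uniformly almost periodic differences, `α` and `γ` positive, then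
`x_i(t) = ∫_{t-h}^t α(s) x_m(s) e^{-∫_s^t γ} ds` is continuous and Bohr almost periodic. -/
theorem immature_bohr_almost_periodic (h : ℝ) (hh : 0 < h) (t : ℤ → ℝ)
    (α γ xm : ℝ → ℝ)
    (hα : WAP t α) (hγ : WAP t γ) (hxm : WAP t xm)
    (hαpos : ∀ s : ℝ, 0 < α s) (hγpos : ∀ s : ℝ, 0 < γ s)
    (hbd : ∃ M : ℝ, ∀ s : ℝ, |α s| ≤ M ∧ |γ s| ≤ M ∧ |xm s| ≤ M)
    (xi : ℝ → ℝ)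
    (hxi : ∀ s : ℝ, xi s = ∫ u in (s - h)..s, α u * xm u * Real.exp (-∫ r in u..s, γ r)) :
    Continuous xi ∧
      ∀ ε > (0 : ℝ), ∃ Γ : Set ℝ, RelDenseR Γ ∧
        ∀ τ ∈ Γ, ∀ s : ℝ, |xi (s + τ) - xi s| < ε :=
  immature_bohr_almost_periodic_general h hh t α γ xm hα hγ hxm hγpos hbd xi hxi
end
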